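/- arXiv:2311.11475 — 5 statements merged into one kernel-verified Lean document; each statement's English description precedes it below -/
import Mathlib

section
/- (Cramér–Rao inequality) Let μ(dx) = exp(−U(x)) dx be a probability measure on ℝ^d whose potential U : ℝ^d → ℝ is of class C², and suppose the matrix E_μ[∇²U] := ∫ ∇²U(x) dμ(x) is well defined and positive definite. Then for every continuously differentiable f : ℝ^d → ℝ with f ∈ L²(μ) and ∇f integrable with respect to μ, Var_μ(f) ≥ ⟨E_μ[∇f], (E_μ[∇²U])^{-1} E_μ[∇f]⟩. -/
open MeasureTheory Real Set
open scoped ENNReal NNReal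

noncomputable section

namespace CramerRaoAux

variable {d : ℕ}

lemma decomp (v : EuclideanSpace ℝ (Fin d)) :
    v = ∑ i, v i • EuclideanSpace.single i (1:ℝ) := by
  have := (EuclideanSpace.basisFun (Fin d) ℝ).sum_repr v
  simp only [EuclideanSpace.basisFun_apply, EuclideanSpace.basisFun_repr] at this
  exact this.symm

lemma bilin_expand (B : EuclideanSpace ℝ (Fin d) →L[ℝ] (EuclideanSpace ℝ (Fin d) →L[ℝ] ℝ))
    (v w : EuclideanSpace ℝ (Fin d)) :
    B v w = ∑ i, ∑ j, v i * w j * B (EuclideanSpace.single i 1) (EuclideanSpace.single j 1) := by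
  conv_lhs => rw [decomp v]
  rw [map_sum, ContinuousLinearMap.sum_apply]
  refine Finset.sum_congr rfl fun i _ => ?_
  rw [_root_.map_smul, ContinuousLinearMap.smul_apply]
  conv_lhs => rw [decomp w]
  rw [map_sum, smul_eq_mul, Finset.mul_sum]
  refine Finset.sum_congr rfl fun j _ => ?_
  rw [_root_.map_smul, smul_eq_mul]
  ring

lemma gradient_apply_eq (f : EuclideanSpace ℝ (Fin d) → ℝ) (x : EuclideanSpace ℝ (Fin d))
    (i : Fin d) : gradient f x i = fderiv ℝ f x (EuclideanSpace.single i 1) := by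
  have h1 : (inner ℝ (gradient f x) (EuclideanSpace.single i (1:ℝ)) : ℝ)
      = fderiv ℝ f x (EuclideanSpace.single i 1) := by
    rw [gradient]
    exact InnerProductSpace.toDual_symm_apply
  rw [EuclideanSpace.inner_single_right] at h1
  simpa using h1

lemma fderiv_apply_expand (f : EuclideanSpace ℝ (Fin d) → ℝ)
    (hf : Differentiable ℝ f) (x a : EuclideanSpace ℝ (Fin d)) :
    fderiv ℝ f x a = ∑ i, a i * gradient f x i := by
  conv_lhs => rw [decomp a]
  rw [map_sum]
  refine Finset.sum_congr rfl fun i _ => ?_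
  rw [_root_.map_smul, smul_eq_mul, gradient_apply_eq]

lemma integral_fderiv_apply_eq_zero (a : EuclideanSpace ℝ (Fin d))
    (G : EuclideanSpace ℝ (Fin d) → ℝ) (hG : ContDiff ℝ 1 G)
    (hGi : Integrable G (volume : Measure (EuclideanSpace ℝ (Fin d))))
    (hG'i : Integrable (fun x => fderiv ℝ G x a) (volume : Measure (EuclideanSpace ℝ (Fin d)))) :
    ∫ x, fderiv ℝ G x a = 0 := by
  have hGd : Differentiable ℝ G := hG.differentiable one_ne_zero
  have hG'c : Continuous fun x : EuclideanSpace ℝ (Fin d) => fderiv ℝ G x a :=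
    ((hG.continuous_fderiv one_ne_zero).clm_apply continuous_const)
  have hmap : Continuous fun q : EuclideanSpace ℝ (Fin d) × ℝ => q.1 + q.2 • a :=
    continuous_fst.add (continuous_snd.smul continuous_const)
  have hcont2 : Continuous fun q : EuclideanSpace ℝ (Fin d) × ℝ =>
      fderiv ℝ G (q.1 + q.2 • a) a := hG'c.comp hmap
  set ν : Measure ℝ := volume.restrict (Ioc (0:ℝ) 1) with hν
  have hνuniv : ν univ = 1 := by simp [hν, Real.volume_Ioc]
  have hline : ∀ (x : EuclideanSpace ℝ (Fin d)) (s : ℝ),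
      HasDerivAt (fun τ : ℝ => G (x + τ • a)) (fderiv ℝ G (x + s • a) a) s := by
    intro x s
    have h1 : HasDerivAt (fun τ : ℝ => x + τ • a) a s := by
      simpa using ((hasDerivAt_id s).smul_const a).const_add x
    exact (hGd (x + s • a)).hasFDerivAt.comp_hasDerivAt s h1
  have hFTC : ∀ x : EuclideanSpace ℝ (Fin d),
      ∫ s in (0:ℝ)..1, fderiv ℝ G (x + s • a) a = G (x + a) - G x := by
    intro x
    have := intervalIntegral.integral_eq_sub_of_hasDerivAt (f := fun τ : ℝ => G (x + τ • a))
      (f' := fun s => fderiv ℝ G (x + s • a) a) (a := 0) (b := 1)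
      (fun s _ => hline x s)
      ((hG'c.comp (continuous_const.add (continuous_id.smul continuous_const))).intervalIntegrable 0 1)
    simpa using this
  have hmeas2 : AEMeasurable (fun q : EuclideanSpace ℝ (Fin d) × ℝ =>
      ‖fderiv ℝ G (q.1 + q.2 • a) a‖ₑ)
      ((volume : Measure (EuclideanSpace ℝ (Fin d))).prod ν) :=
    (hcont2.nnnorm.measurable.coe_nnreal_ennreal).aemeasurable
  have hprodint : Integrable (Function.uncurry fun (x : EuclideanSpace ℝ (Fin d)) (s : ℝ) =>
      fderiv ℝ G (x + s • a) a) ((volume : Measure (EuclideanSpace ℝ (Fin d))).prod ν) := by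
    refine ⟨hcont2.aestronglyMeasurable, ?_⟩
    have hlp : ∫⁻ q : EuclideanSpace ℝ (Fin d) × ℝ, ‖fderiv ℝ G (q.1 + q.2 • a) a‖ₑ
          ∂((volume : Measure (EuclideanSpace ℝ (Fin d))).prod ν)
        = ∫⁻ x : EuclideanSpace ℝ (Fin d), ∫⁻ s : ℝ,
            ‖fderiv ℝ G (x + s • a) a‖ₑ ∂ν ∂volume :=
      MeasureTheory.lintegral_prod _ hmeas2
    have hswap : ∫⁻ x : EuclideanSpace ℝ (Fin d), ∫⁻ s : ℝ,
          ‖fderiv ℝ G (x + s • a) a‖ₑ ∂ν ∂volume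
        = ∫⁻ s : ℝ, ∫⁻ x : EuclideanSpace ℝ (Fin d),
            ‖fderiv ℝ G (x + s • a) a‖ₑ ∂volume ∂ν :=
      MeasureTheory.lintegral_lintegral_swap hmeas2
    have hinner : ∀ s : ℝ, ∫⁻ x : EuclideanSpace ℝ (Fin d),
          ‖fderiv ℝ G (x + s • a) a‖ₑ ∂volume
        = ∫⁻ x : EuclideanSpace ℝ (Fin d), ‖fderiv ℝ G x a‖ₑ ∂volume := fun s =>
      lintegral_add_right_eq_self (fun y => ‖fderiv ℝ G y a‖ₑ) (s • a)
    have hfin := hG'i.2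
    rw [HasFiniteIntegral] at hfin
    rw [HasFiniteIntegral, show (fun q : EuclideanSpace ℝ (Fin d) × ℝ =>
        ‖Function.uncurry (fun (x : EuclideanSpace ℝ (Fin d)) (s : ℝ) =>
        fderiv ℝ G (x + s • a) a) q‖ₑ)
      = fun q : EuclideanSpace ℝ (Fin d) × ℝ =>
        ‖fderiv ℝ G (q.1 + q.2 • a) a‖ₑ from rfl]
    rw [hlp, hswap]
    simp_rw [hinner]
    rw [lintegral_const, hνuniv, mul_one]
    exact hfin
  have htransint : Integrable (fun x : EuclideanSpace ℝ (Fin d) => G (x + a)) volume := by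
    have mp := measurePreserving_add_right (volume : Measure (EuclideanSpace ℝ (Fin d))) a
    exact (mp.integrable_comp hGi.aestronglyMeasurable).mpr hGi
  have key : ∫ x : EuclideanSpace ℝ (Fin d), (G (x + a) - G x) = ∫ x, fderiv ℝ G x a := by
    calc ∫ x : EuclideanSpace ℝ (Fin d), (G (x + a) - G x)
        = ∫ x : EuclideanSpace ℝ (Fin d), ∫ s in (0:ℝ)..1, fderiv ℝ G (x + s • a) a :=
          integral_congr_ae (Filter.Eventually.of_forall fun x => (hFTC x).symm)
      _ = ∫ x : EuclideanSpace ℝ (Fin d), ∫ s, fderiv ℝ G (x + s • a) a ∂ν :=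
          integral_congr_ae (Filter.Eventually.of_forall fun x =>
            intervalIntegral.integral_of_le zero_le_one)
      _ = ∫ s, ∫ x : EuclideanSpace ℝ (Fin d), fderiv ℝ G (x + s • a) a ∂volume ∂ν :=
          MeasureTheory.integral_integral_swap hprodint
      _ = ∫ s, (∫ x, fderiv ℝ G x a) ∂ν :=
          integral_congr_ae (Filter.Eventually.of_forall fun s =>
            integral_add_right_eq_self (fun y => fderiv ℝ G y a) (s • a))
      _ = ∫ x, fderiv ℝ G x a := by rw [integral_const, measureReal_def, hνuniv]; simp
  have hzero : ∫ x : EuclideanSpace ℝ (Fin d), (G (x + a) - G x) = 0 := by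
    rw [integral_sub htransint hGi, integral_add_right_eq_self G a]
    ring
  rw [← key, hzero]

end CramerRaoAux

open CramerRaoAux

set_option maxHeartbeats 2000000 in
/-- **Cramér–Rao inequality.** For a probability measure `μ(dx) = exp(-U(x)) dx` on `ℝ^d`
with `U` of class `C²` such that `E_μ[∇²U]` is well defined and positive definite, every
`C¹` function `f ∈ L²(μ)` with `∇f` integrable satisfies
`Var_μ(f) ≥ ⟨E_μ[∇f], (E_μ[∇²U])⁻¹ E_μ[∇f]⟩`. -/
theorem cramer_rao_inequality
    (d : ℕ)
    (U : EuclideanSpace ℝ (Fin d) → ℝ)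
    (hU_C2 : ContDiff ℝ 2 U)
    -- the Hessian matrix of U
    (H : EuclideanSpace ℝ (Fin d) → Matrix (Fin d) (Fin d) ℝ)
    (hH : ∀ x, ∀ i j, H x i j =
      iteratedFDeriv ℝ 2 U x ![EuclideanSpace.single i 1, EuclideanSpace.single j 1])
    -- the probability measure μ(dx) = exp(-U(x)) dx
    (μ : Measure (EuclideanSpace ℝ (Fin d))) [IsProbabilityMeasure μ]
    (hμ : μ = volume.withDensity (fun x => ENNReal.ofReal (exp (-U x))))
    -- E_μ[∇²U] is well defined and positive definite
    (hH_int : ∀ i j, Integrable (fun x => H x i j) μ)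
    (M : Matrix (Fin d) (Fin d) ℝ)
    (hM : ∀ i j, M i j = ∫ x, H x i j ∂μ)
    (hM_posdef : M.PosDef)
    -- the test function
    (f : EuclideanSpace ℝ (Fin d) → ℝ)
    (hf_C1 : ContDiff ℝ 1 f)
    (hf_L2 : MemLp f 2 μ)
    (hgrad_int : Integrable (fun x => gradient f x) μ) :
    dotProduct (fun i => ∫ x, gradient f x i ∂μ)
        (M⁻¹.mulVec (fun i => ∫ x, gradient f x i ∂μ))
      ≤ (∫ x, (f x) ^ 2 ∂μ) - (∫ x, f x ∂μ) ^ 2 := by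
  classical
  -- basic regularity
  have hU1 : ContDiff ℝ 1 U := hU_C2.of_le (by norm_num)
  have hUc : Continuous U := hU1.continuous
  set p : EuclideanSpace ℝ (Fin d) → ℝ := fun x => exp (-U x) with hp_def
  have hp_C1 : ContDiff ℝ 1 p := (Real.contDiff_exp.of_le le_top).comp hU1.neg
  have hp_cont : Continuous p := hp_C1.continuous
  have hp_nonneg : ∀ x, 0 ≤ p x := fun x => (exp_pos _).le
  -- transfer between μ and volume
  have hmeasnn : Measurable fun x : EuclideanSpace ℝ (Fin d) => Real.toNNReal (p x) :=
    hp_cont.measurable.real_toNNReal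
  have hdens : (fun x : EuclideanSpace ℝ (Fin d) => ENNReal.ofReal (exp (-U x)))
      = fun x : EuclideanSpace ℝ (Fin d) => ((Real.toNNReal (p x) : ℝ≥0) : ℝ≥0∞) := rfl
  have transfer_int : ∀ F : EuclideanSpace ℝ (Fin d) → ℝ,
      Integrable F μ ↔ Integrable (fun x => F x * p x)
        (volume : Measure (EuclideanSpace ℝ (Fin d))) := by
    intro F
    rw [hμ, hdens, integrable_withDensity_iff_integrable_smul hmeasnn]
    exact integrable_congr (Filter.Eventually.of_forall fun x => by
      simp [NNReal.smul_def, Real.coe_toNNReal _ (hp_nonneg x), mul_comm])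
  have transfer_integral : ∀ F : EuclideanSpace ℝ (Fin d) → ℝ,
      ∫ x, F x ∂μ = ∫ x, F x * p x := by
    intro F
    rw [hμ, hdens, integral_withDensity_eq_integral_smul hmeasnn]
    exact integral_congr_ae (Filter.Eventually.of_forall fun x => by
      simp [NNReal.smul_def, Real.coe_toNNReal _ (hp_nonneg x), mul_comm])
  have hp_int : Integrable p (volume : Measure (EuclideanSpace ℝ (Fin d))) := by
    have h1 : Integrable (fun _ : EuclideanSpace ℝ (Fin d) => (1:ℝ)) μ := integrable_const 1
    have := (transfer_int _).mp h1
    simpa using this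
  -- the vector and direction
  set v : Fin d → ℝ := fun i => ∫ x, gradient f x i ∂μ with hv_def
  set aV : Fin d → ℝ := M⁻¹.mulVec v with haV_def
  set aE : EuclideanSpace ℝ (Fin d) := (WithLp.equiv 2 (Fin d → ℝ)).symm aV with haE_def
  have haEi : ∀ i, aE i = aV i := fun i => rfl
  -- the directional derivative of U
  set h : EuclideanSpace ℝ (Fin d) → ℝ := fun x => fderiv ℝ U x aE with hh_def
  have hfderivU_C1 : ContDiff ℝ 1 (fderiv ℝ U) := hU_C2.fderiv_right (le_refl 2)
  have hh_C1 : ContDiff ℝ 1 h := hfderivU_C1.clm_apply contDiff_const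
  have hh_cont : Continuous h := hh_C1.continuous
  have hh_diff : Differentiable ℝ h := hh_C1.differentiable one_ne_zero
  set D2 : EuclideanSpace ℝ (Fin d) → ℝ := fun x => fderiv ℝ h x aE with hD2_def
  have hD2_cont : Continuous D2 := (hh_C1.continuous_fderiv one_ne_zero).clm_apply continuous_const
  have hD2_eq : ∀ x, D2 x = ∑ i, ∑ j, aE i * aE j * H x i j := by
    intro x
    have hc : DifferentiableAt ℝ (fderiv ℝ U) x := (hfderivU_C1.differentiable one_ne_zero) x
    have h1 : fderiv ℝ h x = (fderiv ℝ (fderiv ℝ U) x).flip aE := by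
      rw [hh_def]
      rw [fderiv_clm_apply hc (differentiableAt_const aE)]
      simp
    have h2 : D2 x = (fderiv ℝ (fderiv ℝ U) x) aE aE := by
      show fderiv ℝ h x aE = _
      rw [h1]; rfl
    rw [h2, bilin_expand]
    refine Finset.sum_congr rfl fun i _ => Finset.sum_congr rfl fun j _ => ?_
    rw [hH x i j, iteratedFDeriv_two_apply]
    simp
  have hD2_int : Integrable D2 μ := by
    have hsum : Integrable (fun x => ∑ i, ∑ j, aE i * aE j * H x i j) μ :=
      integrable_finset_sum _ fun i _ => integrable_finset_sum _ fun j _ =>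
        (hH_int i j).const_mul (aE i * aE j)
    exact hsum.congr (Filter.Eventually.of_forall fun x => (hD2_eq x).symm)
  have habsD2_int : Integrable (fun x => |D2 x|) μ := hD2_int.abs
  set K : ℝ := ∫ x, |D2 x| ∂μ with hK_def
  have hUdiff : Differentiable ℝ U := hU1.differentiable one_ne_zero
  have hp_fderiv : ∀ x, HasFDerivAt p (p x • (-(fderiv ℝ U x))) x := by
    intro x
    have h1 : HasFDerivAt (fun y : EuclideanSpace ℝ (Fin d) => -U y) (-(fderiv ℝ U x)) x :=
      ((hUdiff x).hasFDerivAt).neg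
    have h2 := (Real.hasDerivAt_exp (-U x)).comp_hasFDerivAt x h1
    simpa [hp_def, Function.comp_def] using h2
  -- the key uniform bound coming from integration by parts with a cutoff
  have key_bound : ∀ n : ℕ, ∫ x, (((n:ℝ)+1)^2 * (h x)^2) / ((((n:ℝ)+1)^2) + (h x)^2) ∂μ ≤ K := by
    intro n
    set T : ℝ := (n:ℝ)+1 with hT_def
    have hT : 0 < T := by positivity
    set ψ : ℝ → ℝ := fun s => T^2 * s / (T^2 + s^2) with hψ_def
    set ψ' : ℝ → ℝ := fun s => (T^2 * (T^2 + s^2) - (T^2 * s) * (2*s)) / (T^2 + s^2)^2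
      with hψ'_def
    have hden : ∀ s : ℝ, T^2 + s^2 ≠ 0 := fun s => by positivity
    have hden' : ∀ s : ℝ, 0 < T^2 + s^2 := fun s => by positivity
    have hψd : ∀ s : ℝ, HasDerivAt ψ (ψ' s) s := by
      intro s
      have h1 : HasDerivAt (fun s : ℝ => T^2 * s) (T^2) s := by
        simpa using (hasDerivAt_id s).const_mul (T^2)
      have h2 : HasDerivAt (fun s : ℝ => T^2 + s^2) (2*s) s := by
        have h3 : HasDerivAt (fun s : ℝ => s^2) (2*s) s := by
          simpa using hasDerivAt_pow 2 s
        simpa using h3.const_add (T^2)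
      simpa [hψ_def, hψ'_def, Pi.div_def] using h1.div h2 (hden s)
    have hψC1 : ContDiff ℝ 1 ψ := by
      refine ContDiff.div ?_ ?_ hden
      · exact contDiff_const.mul contDiff_id
      · exact contDiff_const.add (contDiff_id.pow 2)
    have hψ'_cont : Continuous ψ' := by
      refine Continuous.div ?_ ?_ (fun s => pow_ne_zero 2 (hden s)) <;> fun_prop
    have hψ_bound : ∀ s : ℝ, |ψ s| ≤ T := by
      intro s
      rw [hψ_def]
      rw [abs_div, abs_of_pos (hden' s), div_le_iff₀ (hden' s)]
      have h1 : |T^2 * s| = T^2 * |s| := by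
        rw [abs_mul, abs_of_pos (by positivity : (0:ℝ) < T^2)]
      rw [h1]
      nlinarith [sq_nonneg (|s| - T), abs_nonneg s, sq_abs s]
    have hψ'_bound : ∀ s : ℝ, |ψ' s| ≤ 1 := by
      intro s
      rw [hψ'_def]
      rw [abs_div, abs_of_pos (by positivity : (0:ℝ) < (T^2+s^2)^2), div_le_one (by positivity)]
      have h1 : T^2 * (T^2 + s^2) - (T^2 * s) * (2*s) = T^2 * (T^2 - s^2) := by ring
      rw [h1]
      rw [abs_mul, abs_of_pos (by positivity : (0:ℝ) < T^2)]
      have h2 : |T^2 - s^2| ≤ T^2 + s^2 := by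
        rw [abs_le]; constructor <;> nlinarith [sq_nonneg s, sq_nonneg T]
      nlinarith [sq_nonneg s, sq_nonneg T]
    have hψs_eq : ∀ s : ℝ, ψ s * s = (T^2*s^2)/(T^2+s^2) := by
      intro s
      rw [hψ_def]
      field_simp
    have hψs_nonneg : ∀ s : ℝ, 0 ≤ ψ s * s := by
      intro s
      rw [hψs_eq]
      positivity
    have hψs_bound : ∀ s : ℝ, ψ s * s ≤ T^2 := by
      intro s
      rw [hψs_eq, div_le_iff₀ (hden' s)]
      nlinarith [sq_nonneg s, sq_nonneg (s*s)]
    set G : EuclideanSpace ℝ (Fin d) → ℝ := fun x => ψ (h x) * p x with hG_def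
    have hG_C1 : ContDiff ℝ 1 G := (hψC1.comp hh_C1).mul hp_C1
    have hGder : ∀ x, fderiv ℝ G x aE = ψ' (h x) * D2 x * p x - (ψ (h x) * h x) * p x := by
      intro x
      have h1 : HasFDerivAt h (fderiv ℝ h x) x := (hh_diff x).hasFDerivAt
      have h2 : HasFDerivAt (fun y => ψ (h y)) (ψ' (h x) • fderiv ℝ h x) x :=
        (hψd (h x)).comp_hasFDerivAt x h1
      have h3 : HasFDerivAt (fun y => ψ (h y) * p y) _ x := h2.mul (hp_fderiv x)
      rw [h3.fderiv]
      have h4 : h x = fderiv ℝ U x aE := rfl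
      have h5 : D2 x = fderiv ℝ h x aE := rfl
      simp only [ContinuousLinearMap.add_apply, ContinuousLinearMap.smul_apply,
        ContinuousLinearMap.neg_apply, smul_eq_mul]
      rw [← h4, ← h5]
      ring
    have hG_int : Integrable G (volume : Measure (EuclideanSpace ℝ (Fin d))) := by
      refine (hp_int.const_mul T).mono' hG_C1.continuous.aestronglyMeasurable ?_
      refine Filter.Eventually.of_forall fun x => ?_
      rw [hG_def]
      simp only [norm_mul, Real.norm_eq_abs]
      rw [abs_of_nonneg (hp_nonneg x)]
      exact mul_le_mul_of_nonneg_right (hψ_bound (h x)) (hp_nonneg x)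
    have hDp_int_vol : Integrable (fun x => D2 x * p x)
        (volume : Measure (EuclideanSpace ℝ (Fin d))) := (transfer_int D2).mp hD2_int
    have hterm1 : Integrable (fun x => ψ' (h x) * D2 x * p x)
        (volume : Measure (EuclideanSpace ℝ (Fin d))) := by
      refine hDp_int_vol.abs.mono' ?_ ?_
      · exact ((hψ'_cont.comp hh_cont).mul hD2_cont |>.mul hp_cont).aestronglyMeasurable
      · refine Filter.Eventually.of_forall fun x => ?_
        simp only [norm_mul, Real.norm_eq_abs, abs_abs]
        have := hψ'_bound (h x)
        have h0 : |ψ' (h x)| * |D2 x| ≤ 1 * |D2 x| :=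
          mul_le_mul_of_nonneg_right this (abs_nonneg _)
        calc |ψ' (h x)| * |D2 x| * |p x| ≤ 1 * |D2 x| * |p x| :=
              mul_le_mul_of_nonneg_right h0 (abs_nonneg _)
          _ = |D2 x * p x| := by rw [abs_mul]; ring
    have hterm2 : Integrable (fun x => (ψ (h x) * h x) * p x)
        (volume : Measure (EuclideanSpace ℝ (Fin d))) := by
      refine (hp_int.const_mul (T^2)).mono' ?_ ?_
      · exact (((hψC1.continuous.comp hh_cont).mul hh_cont).mul hp_cont).aestronglyMeasurable
      · refine Filter.Eventually.of_forall fun x => ?_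
        simp only [Real.norm_eq_abs]
        rw [abs_mul, abs_of_nonneg (hψs_nonneg (h x)), abs_of_nonneg (hp_nonneg x)]
        exact mul_le_mul_of_nonneg_right (hψs_bound (h x)) (hp_nonneg x)
    have hG'_int : Integrable (fun x => fderiv ℝ G x aE)
        (volume : Measure (EuclideanSpace ℝ (Fin d))) :=
      (hterm1.sub hterm2).congr (Filter.Eventually.of_forall fun x => (hGder x).symm)
    have hZ := integral_fderiv_apply_eq_zero aE G hG_C1 hG_int hG'_int
    rw [integral_congr_ae (Filter.Eventually.of_forall hGder),
      integral_sub hterm1 hterm2, sub_eq_zero] at hZ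
    have e1 : ∫ x, ψ' (h x) * D2 x ∂μ = ∫ x, ψ' (h x) * D2 x * p x :=
      transfer_integral (fun x => ψ' (h x) * D2 x)
    have e2 : ∫ x, ψ (h x) * h x ∂μ = ∫ x, (ψ (h x) * h x) * p x :=
      transfer_integral (fun x => ψ (h x) * h x)
    have hμeq : ∫ x, ψ (h x) * h x ∂μ = ∫ x, ψ' (h x) * D2 x ∂μ := by
      rw [e1, e2, hZ]
    have hint_μ1 : Integrable (fun x => ψ' (h x) * D2 x) μ := (transfer_int _).mpr hterm1
    have hle : ∫ x, ψ' (h x) * D2 x ∂μ ≤ K := by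
      rw [hK_def]
      refine integral_mono hint_μ1 habsD2_int fun x => ?_
      calc ψ' (h x) * D2 x ≤ |ψ' (h x) * D2 x| := le_abs_self _
        _ = |ψ' (h x)| * |D2 x| := abs_mul _ _
        _ ≤ 1 * |D2 x| := mul_le_mul_of_nonneg_right (hψ'_bound (h x)) (abs_nonneg _)
        _ = |D2 x| := one_mul _
    have hfinal : ∫ x, (T^2 * (h x)^2) / (T^2 + (h x)^2) ∂μ
        = ∫ x, ψ (h x) * h x ∂μ :=
      integral_congr_ae (Filter.Eventually.of_forall fun x => (hψs_eq (h x)).symm)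
    rw [hfinal, hμeq]
    exact hle
  -- Fatou: h is square integrable
  have hBn_cont : ∀ n : ℕ, Continuous (fun x : EuclideanSpace ℝ (Fin d) =>
      (((n:ℝ)+1)^2 * (h x)^2) / ((((n:ℝ)+1)^2) + (h x)^2)) := by
    intro n
    refine Continuous.div (by fun_prop) (by fun_prop) (fun x => by positivity)
  have hBn_int : ∀ n : ℕ, Integrable (fun x : EuclideanSpace ℝ (Fin d) =>
      (((n:ℝ)+1)^2 * (h x)^2) / ((((n:ℝ)+1)^2) + (h x)^2)) μ := by
    intro n
    refine (integrable_const (((n:ℝ)+1)^2)).mono' (hBn_cont n).aestronglyMeasurable ?_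
    refine Filter.Eventually.of_forall fun x => ?_
    have h1 : (0:ℝ) < ((n:ℝ)+1)^2 + (h x)^2 := by positivity
    rw [Real.norm_eq_abs, abs_of_nonneg (by positivity), div_le_iff₀ h1]
    nlinarith [sq_nonneg (h x), sq_nonneg ((h x)*(h x))]
  have hBn_nonneg : ∀ (n : ℕ) (x : EuclideanSpace ℝ (Fin d)),
      0 ≤ (((n:ℝ)+1)^2 * (h x)^2) / ((((n:ℝ)+1)^2) + (h x)^2) := by
    intro n x; positivity
  have htend : ∀ x : EuclideanSpace ℝ (Fin d), Filter.Tendsto (fun n : ℕ =>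
      (((n:ℝ)+1)^2 * (h x)^2) / ((((n:ℝ)+1)^2) + (h x)^2)) Filter.atTop (nhds ((h x)^2)) := by
    intro x
    have hTa : Filter.Tendsto (fun n : ℕ => ((n:ℝ)+1)^2) Filter.atTop Filter.atTop :=
      (Filter.tendsto_pow_atTop (two_ne_zero)).comp
        (Filter.tendsto_atTop_add_const_right _ 1 tendsto_natCast_atTop_atTop)
    have hden : Filter.Tendsto (fun n : ℕ => ((n:ℝ)+1)^2 + (h x)^2) Filter.atTop Filter.atTop :=
      Filter.tendsto_atTop_add_const_right _ ((h x)^2) hTa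
    have h2 : Filter.Tendsto (fun n : ℕ => (h x)^4 / (((n:ℝ)+1)^2 + (h x)^2))
        Filter.atTop (nhds 0) := Filter.Tendsto.div_atTop tendsto_const_nhds hden
    have h3 : Filter.Tendsto (fun n : ℕ => (h x)^2 - (h x)^4 / (((n:ℝ)+1)^2 + (h x)^2))
        Filter.atTop (nhds ((h x)^2)) := by
      simpa using tendsto_const_nhds.sub h2
    refine h3.congr fun n => ?_
    have h4 : (0:ℝ) < ((n:ℝ)+1)^2 + (h x)^2 := by positivity
    field_simp
    ring
  have hlint : ∫⁻ x, ENNReal.ofReal ((h x)^2) ∂μ ≤ ENNReal.ofReal K := by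
    have hmeasn : ∀ n : ℕ, Measurable (fun x : EuclideanSpace ℝ (Fin d) =>
        ENNReal.ofReal ((((n:ℝ)+1)^2 * (h x)^2) / ((((n:ℝ)+1)^2) + (h x)^2))) := fun n =>
      ((hBn_cont n).measurable).ennreal_ofReal
    have hlim : ∀ x : EuclideanSpace ℝ (Fin d), ENNReal.ofReal ((h x)^2)
        = Filter.liminf (fun n : ℕ => ENNReal.ofReal
            ((((n:ℝ)+1)^2 * (h x)^2) / ((((n:ℝ)+1)^2) + (h x)^2))) Filter.atTop := fun x =>
      ((ENNReal.tendsto_ofReal (htend x)).liminf_eq).symm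
    calc ∫⁻ x, ENNReal.ofReal ((h x)^2) ∂μ
        = ∫⁻ x, Filter.liminf (fun n : ℕ => ENNReal.ofReal
            ((((n:ℝ)+1)^2 * (h x)^2) / ((((n:ℝ)+1)^2) + (h x)^2))) Filter.atTop ∂μ := by
          exact lintegral_congr fun x => hlim x
      _ ≤ Filter.liminf (fun n : ℕ => ∫⁻ x, ENNReal.ofReal
            ((((n:ℝ)+1)^2 * (h x)^2) / ((((n:ℝ)+1)^2) + (h x)^2)) ∂μ) Filter.atTop :=
          lintegral_liminf_le hmeasn
      _ ≤ Filter.liminf (fun _ : ℕ => ENNReal.ofReal K) Filter.atTop := by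
          refine Filter.liminf_le_liminf (Filter.Eventually.of_forall fun n => ?_)
          rw [← ofReal_integral_eq_lintegral_ofReal (hBn_int n)
            (Filter.Eventually.of_forall fun x => hBn_nonneg n x)]
          exact ENNReal.ofReal_le_ofReal (key_bound n)
      _ = ENNReal.ofReal K := Filter.liminf_const _
  have hh2_int : Integrable (fun x => (h x)^2) μ := by
    refine ⟨(hh_cont.pow 2).aestronglyMeasurable, ?_⟩
    rw [HasFiniteIntegral]
    have : ∀ x : EuclideanSpace ℝ (Fin d), ‖(h x)^2‖ₑ = ENNReal.ofReal ((h x)^2) :=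
      fun x => (Real.enorm_eq_ofReal (sq_nonneg _))
    simp_rw [this]
    exact lt_of_le_of_lt hlint ENNReal.ofReal_lt_top
  have hh_mem2 : MemLp h 2 μ := (memLp_two_iff_integrable_sq
    hh_cont.aestronglyMeasurable).mpr hh2_int
  have hh_int : Integrable h μ := hh_mem2.integrable one_le_two
  -- integration by parts identities
  have hD2p_int : Integrable (fun x => D2 x * p x)
      (volume : Measure (EuclideanSpace ℝ (Fin d))) := (transfer_int D2).mp hD2_int
  have hhp_int : Integrable (fun x => h x * p x)
      (volume : Measure (EuclideanSpace ℝ (Fin d))) := (transfer_int h).mp hh_int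
  have hh2p_int : Integrable (fun x => (h x)^2 * p x)
      (volume : Measure (EuclideanSpace ℝ (Fin d))) := (transfer_int _).mp hh2_int
  have hG1der : ∀ x, fderiv ℝ (fun y => h y * p y) x aE = D2 x * p x - (h x)^2 * p x := by
    intro x
    have h1 : HasFDerivAt h (fderiv ℝ h x) x := (hh_diff x).hasFDerivAt
    have h3 : HasFDerivAt (fun y => h y * p y) _ x := h1.mul (hp_fderiv x)
    rw [h3.fderiv]
    have h4 : h x = fderiv ℝ U x aE := rfl
    have h5 : D2 x = fderiv ℝ h x aE := rfl
    simp only [ContinuousLinearMap.add_apply, ContinuousLinearMap.smul_apply,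
      ContinuousLinearMap.neg_apply, smul_eq_mul]
    rw [← h4, ← h5]
    ring
  have heq1 : ∫ x, D2 x ∂μ = ∫ x, (h x)^2 ∂μ := by
    have hint : Integrable (fun x => fderiv ℝ (fun y => h y * p y) x aE)
        (volume : Measure (EuclideanSpace ℝ (Fin d))) :=
      (hD2p_int.sub hh2p_int).congr (Filter.Eventually.of_forall fun x => (hG1der x).symm)
    have hz := integral_fderiv_apply_eq_zero aE _ (hh_C1.mul hp_C1) hhp_int hint
    rw [integral_congr_ae (Filter.Eventually.of_forall hG1der),
      integral_sub hD2p_int hh2p_int, sub_eq_zero] at hz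
    rw [transfer_integral D2, transfer_integral (fun x => (h x)^2)]
    exact hz
  have hzero : ∫ x, h x ∂μ = 0 := by
    have hder : ∀ x, fderiv ℝ p x aE = -(h x * p x) := by
      intro x
      rw [(hp_fderiv x).fderiv]
      simp only [ContinuousLinearMap.smul_apply, ContinuousLinearMap.neg_apply, smul_eq_mul]
      have h4 : h x = fderiv ℝ U x aE := rfl
      rw [← h4]
      ring
    have hint : Integrable (fun x => fderiv ℝ p x aE)
        (volume : Measure (EuclideanSpace ℝ (Fin d))) :=
      (hhp_int.neg).congr (Filter.Eventually.of_forall fun x => (hder x).symm)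
    have hz := integral_fderiv_apply_eq_zero aE p hp_C1 hp_int hint
    rw [integral_congr_ae (Filter.Eventually.of_forall hder), integral_neg, neg_eq_zero] at hz
    rw [transfer_integral h]
    exact hz
  -- gradient components
  have hgrad_i_int : ∀ i, Integrable (fun x => gradient f x i) μ := by
    intro i
    have hc := (EuclideanSpace.proj (𝕜 := ℝ) (ι := Fin d) i).integrable_comp hgrad_int
    exact hc.congr (Filter.Eventually.of_forall fun x => rfl)
  have hfd : Differentiable ℝ f := hf_C1.differentiable one_ne_zero
  have hfderivf_int : Integrable (fun x => fderiv ℝ f x aE) μ := by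
    have hsum : Integrable (fun x => ∑ i, aE i * gradient f x i) μ :=
      integrable_finset_sum _ fun i _ => (hgrad_i_int i).const_mul _
    exact hsum.congr (Filter.Eventually.of_forall fun x => (fderiv_apply_expand f hfd x aE).symm)
  have hfh_int : Integrable (fun x => f x * h x) μ := by
    have hm1 : MemLp (f • h) 1 μ := hh_mem2.smul hf_L2
    exact (memLp_one_iff_integrable.mp hm1).congr
      (Filter.Eventually.of_forall fun x => by simp [Pi.smul_apply, smul_eq_mul])
  have hf_int : Integrable f μ := hf_L2.integrable one_le_two
  have hfp_int : Integrable (fun x => f x * p x)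
      (volume : Measure (EuclideanSpace ℝ (Fin d))) := (transfer_int f).mp hf_int
  have hfhp_int : Integrable (fun x => (f x * h x) * p x)
      (volume : Measure (EuclideanSpace ℝ (Fin d))) := (transfer_int _).mp hfh_int
  have hfderivp_int : Integrable (fun x => fderiv ℝ f x aE * p x)
      (volume : Measure (EuclideanSpace ℝ (Fin d))) := (transfer_int _).mp hfderivf_int
  have hG3der : ∀ x, fderiv ℝ (fun y => f y * p y) x aE
      = fderiv ℝ f x aE * p x - (f x * h x) * p x := by
    intro x
    have h1 : HasFDerivAt f (fderiv ℝ f x) x := (hfd x).hasFDerivAt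
    have h3 : HasFDerivAt (fun y => f y * p y) _ x := h1.mul (hp_fderiv x)
    rw [h3.fderiv]
    have h4 : h x = fderiv ℝ U x aE := rfl
    simp only [ContinuousLinearMap.add_apply, ContinuousLinearMap.smul_apply,
      ContinuousLinearMap.neg_apply, smul_eq_mul]
    rw [← h4]
    ring
  have hIBP : ∫ x, fderiv ℝ f x aE ∂μ = ∫ x, f x * h x ∂μ := by
    have hint : Integrable (fun x => fderiv ℝ (fun y => f y * p y) x aE)
        (volume : Measure (EuclideanSpace ℝ (Fin d))) :=
      (hfderivp_int.sub hfhp_int).congr (Filter.Eventually.of_forall fun x => (hG3der x).symm)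
    have hz := integral_fderiv_apply_eq_zero aE _ (hf_C1.mul hp_C1) hfp_int hint
    rw [integral_congr_ae (Filter.Eventually.of_forall hG3der),
      integral_sub hfderivp_int hfhp_int, sub_eq_zero] at hz
    rw [transfer_integral (fun x => fderiv ℝ f x aE), transfer_integral (fun x => f x * h x)]
    exact hz
  -- the scalar s
  set s : ℝ := ∫ x, f x * h x ∂μ with hs_def
  have hs_eq_dot : dotProduct v aV = s := by
    have h1 : ∫ x, fderiv ℝ f x aE ∂μ = ∑ i, aE i * v i := by
      calc ∫ x, fderiv ℝ f x aE ∂μ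
          = ∫ x, ∑ i, aE i * gradient f x i ∂μ :=
            integral_congr_ae (Filter.Eventually.of_forall fun x => fderiv_apply_expand f hfd x aE)
        _ = ∑ i, ∫ x, aE i * gradient f x i ∂μ :=
            integral_finset_sum _ fun i _ => (hgrad_i_int i).const_mul _
        _ = ∑ i, aE i * v i := by
            refine Finset.sum_congr rfl fun i _ => ?_
            rw [integral_const_mul]
    calc dotProduct v aV = ∑ i, v i * aV i := rfl
      _ = ∑ i, aE i * v i := Finset.sum_congr rfl fun i _ => by rw [haEi i]; ring
      _ = ∫ x, fderiv ℝ f x aE ∂μ := h1.symm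
      _ = s := hIBP
  have hm_eq : ∫ x, (h x)^2 ∂μ = s := by
    have h2 : ∫ x, D2 x ∂μ = ∑ i, ∑ j, aE i * aE j * M i j := by
      calc ∫ x, D2 x ∂μ
          = ∫ x, ∑ i, ∑ j, aE i * aE j * H x i j ∂μ :=
            integral_congr_ae (Filter.Eventually.of_forall fun x => hD2_eq x)
        _ = ∑ i, ∫ x, ∑ j, aE i * aE j * H x i j ∂μ :=
            integral_finset_sum _ fun i _ => integrable_finset_sum _ fun j _ =>
              (hH_int i j).const_mul _
        _ = ∑ i, ∑ j, ∫ x, aE i * aE j * H x i j ∂μ :=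
            Finset.sum_congr rfl fun i _ => integral_finset_sum _ fun j _ =>
              (hH_int i j).const_mul _
        _ = ∑ i, ∑ j, aE i * aE j * M i j := by
            refine Finset.sum_congr rfl fun i _ => Finset.sum_congr rfl fun j _ => ?_
            rw [integral_const_mul, hM i j]
    have hdet : IsUnit M.det := (Ne.isUnit hM_posdef.det_pos.ne')
    have h4 : M.mulVec aV = v := by
      rw [haV_def, Matrix.mulVec_mulVec, Matrix.mul_nonsing_inv M hdet, Matrix.one_mulVec]
    have h3 : ∑ i, ∑ j, aE i * aE j * M i j = dotProduct aV (M.mulVec aV) := by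
      rw [dotProduct]
      refine Finset.sum_congr rfl fun i _ => ?_
      rw [Matrix.mulVec, dotProduct, Finset.mul_sum]
      refine Finset.sum_congr rfl fun j _ => ?_
      rw [haEi i, haEi j]
      ring
    calc ∫ x, (h x)^2 ∂μ = ∫ x, D2 x ∂μ := heq1.symm
      _ = ∑ i, ∑ j, aE i * aE j * M i j := h2
      _ = dotProduct aV (M.mulVec aV) := h3
      _ = dotProduct aV v := by rw [h4]
      _ = dotProduct v aV := dotProduct_comm _ _
      _ = s := hs_eq_dot
  -- variance and Cauchy–Schwarz
  set c : ℝ := ∫ x, f x ∂μ with hc_def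
  have hf2_int : Integrable (fun x => (f x)^2) μ :=
    (memLp_two_iff_integrable_sq hf_L2.1).mp hf_L2
  have hs_nonneg : 0 ≤ s := by
    rw [← hm_eq]
    exact integral_nonneg fun x => sq_nonneg _
  have hφh_int : Integrable (fun x => (f x - c) * h x) μ :=
    (hfh_int.sub (hh_int.const_mul c)).congr
      (Filter.Eventually.of_forall fun x => by simp only [Pi.sub_apply]; ring)
  have hφh_eq : ∫ x, (f x - c) * h x ∂μ = s := by
    have h1 : (fun x => (f x - c) * h x) = fun x => f x * h x - c * h x := by
      funext x; ring
    rw [h1, integral_sub hfh_int (hh_int.const_mul c), integral_const_mul, hzero]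
    simp [hs_def]
  have hφ2_int : Integrable (fun x => (f x - c)^2) μ := by
    have h1 : Integrable (fun x => (f x)^2 - (2*c)*f x + c^2) μ :=
      (hf2_int.sub (hf_int.const_mul (2*c))).add (integrable_const (c^2))
    exact h1.congr (Filter.Eventually.of_forall fun x => by ring)
  have hφ2_eq : ∫ x, (f x - c)^2 ∂μ = (∫ x, (f x)^2 ∂μ) - c^2 := by
    have h1 : (fun x => (f x - c)^2) = fun x => ((f x)^2 - (2*c)*f x + c^2) := by
      funext x; ring
    have hint_a : Integrable (fun x => (f x)^2 - (2*c)*f x) μ :=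
      hf2_int.sub (hf_int.const_mul (2*c))
    rw [h1, integral_add hint_a (integrable_const _),
      integral_sub hf2_int (hf_int.const_mul (2*c)), integral_const_mul, integral_const]
    simp only [measureReal_def, measure_univ, ENNReal.toReal_one, smul_eq_mul, one_mul]
    rw [← hc_def]
    ring
  have quad : ∀ t : ℝ, 0 ≤ s * (t*t) + (2*s)*t + ((∫ x, (f x)^2 ∂μ) - c^2) := by
    intro t
    have h0 : 0 ≤ ∫ x, ((f x - c) + t * h x)^2 ∂μ := integral_nonneg fun x => sq_nonneg _
    have h1 : (fun x => ((f x - c) + t * h x)^2)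
        = fun x => ((t*t) * (h x)^2 + (2*t) * ((f x - c) * h x)) + (f x - c)^2 := by
      funext x; ring
    have hint_b : Integrable (fun x => (t*t) * (h x)^2 + (2*t) * ((f x - c) * h x)) μ :=
      (hh2_int.const_mul (t*t)).add (hφh_int.const_mul (2*t))
    rw [h1, integral_add hint_b hφ2_int,
      integral_add (hh2_int.const_mul (t*t)) (hφh_int.const_mul (2*t)),
      integral_const_mul, integral_const_mul, hφh_eq, hφ2_eq, hm_eq] at h0
    nlinarith [h0]
  have hd := discrim_le_zero quad
  rw [discrim] at hd
  have hVf_nonneg : 0 ≤ (∫ x, (f x)^2 ∂μ) - c^2 := by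
    rw [← hφ2_eq]
    exact integral_nonneg fun x => sq_nonneg _
  rw [hs_eq_dot]
  rcases eq_or_lt_of_le hs_nonneg with hs0 | hs0
  · rw [← hs0]
    exact hVf_nonneg
  · nlinarith [hd, hs0]

end
end

section
/- (Tweedie's formula) Let μ be a probability measure on ℝ^d, σ > 0, and define the marginal density p(y) := ∫_{ℝ^d} (2πσ²)^{-d/2} exp(−‖y − x‖²/(2σ²)) dμ(x), which is the density of Y = X + ε with X ~ μ and ε ~ N(0, σ² I_d) independent. Then for every y ∈ ℝ^d (where p(y) > 0), the conditional expectation E[X | Y = y] = (1/p(y)) ∫_{ℝ^d} x (2πσ²)^{-d/2} exp(−‖y − x‖²/(2σ²)) dμ(x) equals y + σ² ∇_y log p(y). -/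
open MeasureTheory Real Set
open scoped ENNReal

noncomputable section

private lemma tweedie_aux_bound {σ : ℝ} (hσ : 0 < σ) {t : ℝ} (ht : 0 ≤ t) :
    t * Real.exp (-t ^ 2 / (2 * σ ^ 2)) ≤ Real.sqrt 2 * σ := by
  have hs2 : Real.sqrt 2 ^ 2 = 2 := Real.sq_sqrt (by norm_num)
  have hs2pos : 0 < Real.sqrt 2 := Real.sqrt_pos.mpr (by norm_num)
  rcases le_or_gt t (Real.sqrt 2 * σ) with h | h
  · have he : Real.exp (-t ^ 2 / (2 * σ ^ 2)) ≤ 1 := by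
      apply Real.exp_le_one_iff.mpr
      have : 0 ≤ t ^ 2 / (2 * σ ^ 2) := by positivity
      linarith [this, neg_div (2 * σ ^ 2) (t ^ 2)]
    nlinarith
  · have htpos : 0 < t := lt_trans (by positivity) h
    have ha : 0 < t ^ 2 / (2 * σ ^ 2) := by positivity
    have h2 : t ^ 2 / (2 * σ ^ 2) ≤ Real.exp (t ^ 2 / (2 * σ ^ 2)) := by
      linarith [Real.add_one_le_exp (t ^ 2 / (2 * σ ^ 2))]
    have he : Real.exp (-t ^ 2 / (2 * σ ^ 2)) ≤ (t ^ 2 / (2 * σ ^ 2))⁻¹ := by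
      rw [neg_div, Real.exp_neg]
      exact inv_anti₀ ha h2
    have hinv : (t ^ 2 / (2 * σ ^ 2))⁻¹ = 2 * σ ^ 2 / t ^ 2 := by
      field_simp
    have key : t * Real.exp (-t ^ 2 / (2 * σ ^ 2)) ≤ t * (2 * σ ^ 2 / t ^ 2) := by
      rw [← hinv]
      exact mul_le_mul_of_nonneg_left he (le_of_lt htpos)
    have : t * (2 * σ ^ 2 / t ^ 2) = 2 * σ ^ 2 / t := by
      field_simp
    rw [this] at key
    refine key.trans ?_
    rw [div_le_iff₀ htpos]
    nlinarith [mul_lt_mul_of_pos_left h (mul_pos hs2pos hσ), hs2, sq_nonneg σ]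

set_option maxHeartbeats 1000000 in
set_option synthInstance.maxHeartbeats 400000 in
/-- **Tweedie's formula.** Let `μ` be a probability measure on `ℝ^d` with finite first
moment, `σ > 0`, and let `p` be the density of `Y = X + ε`, `X ~ μ`, `ε ~ N(0, σ² I_d)`
independent. Then at every `y` with `p(y) > 0`,
`E[X | Y = y] = y + σ² ∇ log p(y)`. -/
theorem tweedie_formula
    (d : ℕ)
    (μ : Measure (EuclideanSpace ℝ (Fin d))) [IsProbabilityMeasure μ]
    (hmom : Integrable (fun x => ‖x‖) μ)
    (σ : ℝ) (hσ : 0 < σ)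
    (p : EuclideanSpace ℝ (Fin d) → ℝ)
    (hp : ∀ y, p y =
      ∫ x, (2 * π * σ ^ 2) ^ (-(d:ℝ)/2) * exp (-‖y - x‖ ^ 2 / (2 * σ ^ 2)) ∂μ)
    (y : EuclideanSpace ℝ (Fin d)) (hpy : 0 < p y) :
    (p y)⁻¹ •
        (∫ x, ((2 * π * σ ^ 2) ^ (-(d:ℝ)/2) * exp (-‖y - x‖ ^ 2 / (2 * σ ^ 2))) • x ∂μ)
      = y + σ ^ 2 • gradient (fun z => Real.log (p z)) y := by
  classical
  have hσ2 : (0:ℝ) < σ ^ 2 := by positivity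
  set C : ℝ := (2 * π * σ ^ 2) ^ (-(d:ℝ)/2) with hCdef
  have hCpos : 0 < C := Real.rpow_pos_of_pos (by positivity) _
  set F : EuclideanSpace ℝ (Fin d) → EuclideanSpace ℝ (Fin d) → ℝ :=
    fun z x => C * exp (-‖z - x‖ ^ 2 / (2 * σ ^ 2)) with hFdef
  -- basic bounds on F
  have hFpos : ∀ z x, 0 < F z x := fun z x => by positivity
  have hFle : ∀ z x, F z x ≤ C := by
    intro z x
    have : exp (-‖z - x‖ ^ 2 / (2 * σ ^ 2)) ≤ 1 := by
      apply Real.exp_le_one_iff.mpr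
      have h1 : 0 ≤ ‖z - x‖ ^ 2 / (2 * σ ^ 2) := by positivity
      linarith [neg_div (2 * σ ^ 2) (‖z - x‖ ^ 2)]
    calc F z x = C * exp (-‖z - x‖ ^ 2 / (2 * σ ^ 2)) := rfl
      _ ≤ C * 1 := mul_le_mul_of_nonneg_left this (le_of_lt hCpos)
      _ = C := mul_one C
  have hFcont : ∀ z, Continuous (fun x => F z x) := by
    intro z
    exact continuous_const.mul (Real.continuous_exp.comp (by fun_prop))
  -- pointwise derivative in z
  have hderiv : ∀ (x z : EuclideanSpace ℝ (Fin d)),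
      HasFDerivAt (fun z => F z x)
        ((F z x * (-(σ ^ 2)⁻¹)) • (innerSL ℝ (z - x))) z := by
    intro x z
    have h0 : HasFDerivAt (fun z : EuclideanSpace ℝ (Fin d) => z - x)
        (ContinuousLinearMap.id ℝ _) z := (hasFDerivAt_id z).sub_const x
    have h1 : HasFDerivAt (fun z : EuclideanSpace ℝ (Fin d) => ‖z - x‖ ^ 2)
        (2 • (innerSL ℝ (z - x)).comp (ContinuousLinearMap.id ℝ _)) z := h0.norm_sq
    have h2 : HasFDerivAt
        (fun z : EuclideanSpace ℝ (Fin d) => -‖z - x‖ ^ 2 / (2 * σ ^ 2))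
        ((-(2 * σ ^ 2)⁻¹) •
          (2 • (innerSL ℝ (z - x)).comp (ContinuousLinearMap.id ℝ _))) z := by
      have h1' := h1.const_smul (-(2 * σ ^ 2)⁻¹)
      have heq : (fun z : EuclideanSpace ℝ (Fin d) => -‖z - x‖ ^ 2 / (2 * σ ^ 2))
          = fun z => (-(2 * σ ^ 2)⁻¹) • ‖z - x‖ ^ 2 := by
        funext w; rw [smul_eq_mul]; ring
      rw [heq]; exact h1'
    have h3 := h2.exp
    have h4 := h3.const_mul C
    refine h4.congr_fderiv ?_
    ext v
    simp only [ContinuousLinearMap.smul_apply, ContinuousLinearMap.comp_apply,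
      ContinuousLinearMap.id_apply, innerSL_apply_apply, smul_eq_mul, two_smul,
      ContinuousLinearMap.add_apply]
    ring
  -- integrability facts
  have hint1 : Integrable (fun x => F y x) μ := by
    refine (integrable_const C).mono' ((hFcont y).aestronglyMeasurable)
      (Filter.Eventually.of_forall fun x => ?_)
    rw [Real.norm_eq_abs, abs_of_pos (hFpos y x)]
    exact hFle y x
  have hint2 : Integrable (fun x => F y x • x) μ := by
    refine (hmom.const_mul C).mono'
      (((hFcont y).smul continuous_id).aestronglyMeasurable)
      (Filter.Eventually.of_forall fun x => ?_)
    rw [norm_smul, Real.norm_eq_abs, abs_of_pos (hFpos y x)]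
    exact mul_le_mul_of_nonneg_right (hFle y x) (norm_nonneg x)
  have hintG : Integrable (fun x => (F y x * (-(σ ^ 2)⁻¹)) • (y - x)) μ := by
    refine (((integrable_const ‖y‖).add hmom).const_mul (C * (σ ^ 2)⁻¹)).mono'
      ((((hFcont y).mul continuous_const).smul
        (continuous_const.sub continuous_id)).aestronglyMeasurable)
      (Filter.Eventually.of_forall fun x => ?_)
    rw [norm_smul, Real.norm_eq_abs, abs_mul, abs_of_pos (hFpos y x), abs_neg,
      abs_of_pos (inv_pos.mpr hσ2)]
    have h1 : F y x * (σ ^ 2)⁻¹ ≤ C * (σ ^ 2)⁻¹ :=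
      mul_le_mul_of_nonneg_right (hFle y x) (le_of_lt (inv_pos.mpr hσ2))
    have h2 : ‖y - x‖ ≤ ‖y‖ + ‖x‖ := norm_sub_le y x
    have h3 : 0 ≤ F y x * (σ ^ 2)⁻¹ := by positivity
    calc F y x * (σ ^ 2)⁻¹ * ‖y - x‖ ≤ C * (σ ^ 2)⁻¹ * (‖y‖ + ‖x‖) := by
          apply mul_le_mul h1 h2 (norm_nonneg _)
          positivity
      _ = C * (σ ^ 2)⁻¹ * (‖y‖ + ‖x‖) := rfl
  -- measurability of the derivative family
  have hF'cont : Continuous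
      (fun x => (F y x * (-(σ ^ 2)⁻¹)) • (innerSL ℝ (y - x))) := by
    exact ((hFcont y).mul continuous_const).smul
      ((innerSL ℝ).continuous.comp (continuous_const.sub continuous_id))
  -- norm bound for the derivative family, uniform on a ball
  have hF'bound : ∀ (x z : EuclideanSpace ℝ (Fin d)),
      ‖(F z x * (-(σ ^ 2)⁻¹)) • (innerSL ℝ (z - x))‖
        ≤ C * (σ ^ 2)⁻¹ * (Real.sqrt 2 * σ) := by
    intro x z
    refine le_trans (ContinuousLinearMap.opNorm_smul_le _ _) ?_
    rw [Real.norm_eq_abs, abs_mul, abs_of_pos (hFpos z x), abs_neg,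
      abs_of_pos (inv_pos.mpr hσ2), innerSL_apply_norm]
    have key : ‖z - x‖ * exp (-‖z - x‖ ^ 2 / (2 * σ ^ 2)) ≤ Real.sqrt 2 * σ :=
      tweedie_aux_bound hσ (norm_nonneg _)
    calc F z x * (σ ^ 2)⁻¹ * ‖z - x‖
        = C * (σ ^ 2)⁻¹ * (‖z - x‖ * exp (-‖z - x‖ ^ 2 / (2 * σ ^ 2))) := by
          simp only [hFdef]; ring
      _ ≤ C * (σ ^ 2)⁻¹ * (Real.sqrt 2 * σ) := by
          apply mul_le_mul_of_nonneg_left key; positivity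
  -- differentiation under the integral sign
  have key : HasFDerivAt (fun z => ∫ x, F z x ∂μ)
      (∫ x, (F y x * (-(σ ^ 2)⁻¹)) • (innerSL ℝ (y - x)) ∂μ) y := by
    apply hasFDerivAt_integral_of_dominated_of_fderiv_le (s := Metric.ball y 1) (Metric.ball_mem_nhds y one_pos)
      (Filter.Eventually.of_forall fun z => (hFcont z).aestronglyMeasurable)
      hint1 hF'cont.aestronglyMeasurable
      (Filter.Eventually.of_forall fun x z _ => hF'bound x z)
      (integrable_const _)
      (Filter.Eventually.of_forall fun x z _ => hderiv x z)
  have hp' : p = fun z => ∫ x, F z x ∂μ := funext fun z => hp z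
  have hFp : HasFDerivAt p
      (∫ x, (F y x * (-(σ ^ 2)⁻¹)) • (innerSL ℝ (y - x)) ∂μ) y := by
    rw [hp']; exact key
  -- integrability of the CLM-valued family
  have hintF' : Integrable (fun x => (F y x * (-(σ ^ 2)⁻¹)) • (innerSL ℝ (y - x))) μ :=
    (integrable_const _).mono' hF'cont.aestronglyMeasurable
      (Filter.Eventually.of_forall fun x => hF'bound x y)
  -- the gradient vector
  set G : EuclideanSpace ℝ (Fin d) → EuclideanSpace ℝ (Fin d) :=
    fun x => (F y x * (-(σ ^ 2)⁻¹)) • (y - x) with hGdef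
  have hDual : (∫ x, (F y x * (-(σ ^ 2)⁻¹)) • (innerSL ℝ (y - x)) ∂μ)
      = (InnerProductSpace.toDual ℝ (EuclideanSpace ℝ (Fin d))) (∫ x, G x ∂μ) := by
    ext v
    rw [ContinuousLinearMap.integral_apply hintF']
    rw [InnerProductSpace.toDual_apply_apply]
    rw [real_inner_comm]
    rw [← integral_inner hintG]
    apply integral_congr_ae
    filter_upwards with x
    simp only [ContinuousLinearMap.smul_apply, innerSL_apply_apply, smul_eq_mul, hGdef,
      real_inner_smul_right]
    rw [real_inner_comm]
  have hgradp : HasGradientAt p (∫ x, G x ∂μ) y := by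
    rw [hasGradientAt_iff_hasFDerivAt]
    rw [← hDual]
    exact hFp
  -- gradient of log p
  have hlog : HasGradientAt (fun z => Real.log (p z))
      ((p y)⁻¹ • ∫ x, G x ∂μ) y := by
    rw [hasGradientAt_iff_hasFDerivAt]
    have := (Real.hasDerivAt_log (ne_of_gt hpy)).comp_hasFDerivAt y
      (hasGradientAt_iff_hasFDerivAt.mp hgradp)
    rw [_root_.map_smul]
    exact this
  have hgrad_eq : gradient (fun z => Real.log (p z)) y
      = (p y)⁻¹ • ∫ x, G x ∂μ := hlog.gradient
  -- compute ∫ G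
  have hGexp : ∀ x, G x = (σ ^ 2)⁻¹ • (F y x • x) - (σ ^ 2)⁻¹ • (F y x • y) := by
    intro x
    simp only [hGdef]
    match_scalars <;> ring
  have hIG : ∫ x, G x ∂μ
      = (σ ^ 2)⁻¹ • ((∫ x, F y x • x ∂μ) - (p y) • y) := by
    simp_rw [hGexp]
    have ha : Integrable (fun x => (σ ^ 2)⁻¹ • (F y x • x)) μ := by
      exact hint2.smul ((σ ^ 2)⁻¹)
    have hb : Integrable (fun x => (σ ^ 2)⁻¹ • (F y x • y)) μ := by
      exact (hint1.smul_const y).smul ((σ ^ 2)⁻¹)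
    rw [integral_sub ha hb, integral_smul, integral_smul, integral_smul_const, smul_sub]
    congr 2
    rw [hp']
  -- finish
  have hgoal : (p y)⁻¹ • (∫ x, F y x • x ∂μ)
      = y + σ ^ 2 • gradient (fun z => Real.log (p z)) y := by
    rw [hgrad_eq, hIG]
    have hpne : p y ≠ 0 := ne_of_gt hpy
    have hsne : σ ^ 2 ≠ 0 := ne_of_gt hσ2
    match_scalars <;> field_simp <;> ring
  exact hgoal
end
end

section
/- (Lipschitz flow map bound) Let v : [0,1] × ℝ^d → ℝ^d be continuous and continuously differentiable in x, and let θ : [0,1] → ℝ be continuous such that ⟨w, ∇_x v(t,x) w⟩ ≤ θ_t ‖w‖² for all (t,x) ∈ [0,1] × ℝ^d and all w ∈ ℝ^d. If X, Y : [s,t] → ℝ^d (with 0 ≤ s ≤ t ≤ 1) are differentiable and satisfy X'(u) = v(u, X(u)) and Y'(u) = v(u, Y(u)) for all u ∈ [s,t], then ‖X(t) − Y(t)‖ ≤ exp( ∫_s^t θ_u du ) · ‖X(s) − Y(s)‖; in particular, the flow map X_{s,t} is Lipschitz with constant exp(∫_s^t θ_u du). -/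
open MeasureTheory Real Set
open scoped RealInnerProductSpace

noncomputable section

/-- **Lipschitz bound for the flow map.** If `v` is continuous, `C¹` in the space
variable, and its Jacobian satisfies the one-sided bound
`⟨w, ∇_x v(t,x) w⟩ ≤ θ_t ‖w‖²`, then any two solutions of `X' = v(t, X)` on `[s,t]`
satisfy `‖X(t) − Y(t)‖ ≤ exp(∫_s^t θ) ‖X(s) − Y(s)‖`. -/
theorem flow_map_lipschitz_bound
    (d : ℕ)
    (v : ℝ → EuclideanSpace ℝ (Fin d) → EuclideanSpace ℝ (Fin d))
    (hv_cont : Continuous fun q : ℝ × EuclideanSpace ℝ (Fin d) => v q.1 q.2)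
    (hv_C1 : ∀ t ∈ Icc (0:ℝ) 1, ContDiff ℝ 1 (v t))
    (θ : ℝ → ℝ) (hθ_cont : Continuous θ)
    (hbound : ∀ t ∈ Icc (0:ℝ) 1, ∀ x w : EuclideanSpace ℝ (Fin d),
      ⟪w, fderiv ℝ (v t) x w⟫ ≤ θ t * ‖w‖ ^ 2)
    (s t : ℝ) (hs : 0 ≤ s) (hst : s ≤ t) (ht : t ≤ 1)
    (X Y : ℝ → EuclideanSpace ℝ (Fin d))
    (hX : ∀ u ∈ Icc s t, HasDerivAt X (v u (X u)) u)
    (hY : ∀ u ∈ Icc s t, HasDerivAt Y (v u (Y u)) u) :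
    ‖X t - Y t‖ ≤ Real.exp (∫ u in s..t, θ u) * ‖X s - Y s‖ := by
  have hsub : Icc s t ⊆ Icc (0:ℝ) 1 := Icc_subset_Icc hs ht
  -- Step 1 : one-sided Lipschitz estimate
  have hone : ∀ u ∈ Icc (0:ℝ) 1, ∀ x y : EuclideanSpace ℝ (Fin d),
      ⟪x - y, v u x - v u y⟫ ≤ θ u * ‖x - y‖ ^ 2 := by
    intro u hu x y
    set w := x - y with hw
    have hdiffv : Differentiable ℝ (v u) := (hv_C1 u hu).differentiable one_ne_zero
    set g : ℝ → ℝ := fun r => ⟪w, v u (y + r • w)⟫ with hg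
    have hgd : ∀ r : ℝ, HasDerivAt g (⟪w, fderiv ℝ (v u) (y + r • w) w⟫) r := by
      intro r
      have hline : HasDerivAt (fun r : ℝ => y + r • w) w r := by
        simpa using ((hasDerivAt_id r).smul_const w).const_add y
      have hvf := (hdiffv (y + r • w)).hasFDerivAt
      have h1 := hvf.comp_hasDerivAt r hline
      have h2 := (innerSL ℝ w).hasFDerivAt.comp_hasDerivAt r h1
      exact h2
    set G : ℝ → ℝ := fun r => θ u * ‖w‖ ^ 2 * r - g r with hG
    have hGd : ∀ r, HasDerivAt G
        (θ u * ‖w‖ ^ 2 - ⟪w, fderiv ℝ (v u) (y + r • w) w⟫) r := by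
      intro r
      have := ((hasDerivAt_id r).const_mul (θ u * ‖w‖ ^ 2)).sub (hgd r)
      simp only [mul_one] at this
      exact this
    have hmono : Monotone G := by
      apply monotone_of_deriv_nonneg (fun r => (hGd r).differentiableAt)
      intro r
      rw [(hGd r).deriv]
      have := hbound u hu (y + r • w) w
      linarith
    have h01 := hmono (zero_le_one (α := ℝ))
    have hg0 : g 0 = ⟪w, v u y⟫ := by simp [hg]
    have hg1 : g 1 = ⟪w, v u x⟫ := by
      have hyx : y + (1:ℝ) • w = x := by simp [hw]
      show ⟪w, v u (y + (1:ℝ) • w)⟫ = _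
      rw [hyx]
    have hGval : θ u * ‖w‖ ^ 2 * 0 - g 0 ≤ θ u * ‖w‖ ^ 2 * 1 - g 1 := h01
    rw [hg0, hg1] at hGval
    have : ⟪w, v u x⟫ - ⟪w, v u y⟫ ≤ θ u * ‖w‖ ^ 2 := by linarith
    rw [inner_sub_right]
    exact this
  -- Step 2 : setup
  set Z : ℝ → EuclideanSpace ℝ (Fin d) := fun u => X u - Y u with hZdef
  have hZd : ∀ u ∈ Icc s t, HasDerivAt Z (v u (X u) - v u (Y u)) u :=
    fun u hu => (hX u hu).sub (hY u hu)
  set Θ : ℝ → ℝ := fun u => ∫ r in s..u, θ r with hΘdef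
  have hΘd : ∀ u : ℝ, HasDerivAt Θ (θ u) u := fun u =>
    (hθ_cont.integral_hasStrictDerivAt s u).hasDerivAt
  set f : ℝ → ℝ := fun u => Real.exp (-2 * Θ u) * ⟪Z u, Z u⟫ with hfdef
  have hfd : ∀ u ∈ Icc s t, HasDerivAt f
      (Real.exp (-2 * Θ u) * (-2 * θ u) * ⟪Z u, Z u⟫
        + Real.exp (-2 * Θ u)
          * (⟪Z u, v u (X u) - v u (Y u)⟫ + ⟪v u (X u) - v u (Y u), Z u⟫)) u := by
    intro u hu
    have h1 : HasDerivAt (fun u => Real.exp (-2 * Θ u)) (Real.exp (-2 * Θ u) * (-2 * θ u)) u :=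
      (HasDerivAt.const_mul (-2 : ℝ) (hΘd u)).exp
    have h2 : HasDerivAt (fun u => ⟪Z u, Z u⟫)
        (⟪Z u, v u (X u) - v u (Y u)⟫ + ⟪v u (X u) - v u (Y u), Z u⟫) u :=
      (hZd u hu).inner ℝ (hZd u hu)
    exact h1.mul h2
  -- Step 3 : f is antitone on [s, t]
  have hanti : AntitoneOn f (Icc s t) := by
    apply antitoneOn_of_deriv_nonpos (convex_Icc s t)
    · exact fun u hu => (hfd u hu).continuousAt.continuousWithinAt
    · intro u hu
      rw [interior_Icc] at hu
      exact (hfd u (Ioo_subset_Icc_self hu)).differentiableAt.differentiableWithinAt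
    · intro u hu
      rw [interior_Icc] at hu
      have hu' : u ∈ Icc s t := Ioo_subset_Icc_self hu
      rw [(hfd u hu').deriv]
      have hub : u ∈ Icc (0:ℝ) 1 := hsub hu'
      have hineq := hone u hub (X u) (Y u)
      have hcomm : ⟪v u (X u) - v u (Y u), Z u⟫ = ⟪Z u, v u (X u) - v u (Y u)⟫ :=
        real_inner_comm _ _
      have hZn : ⟪Z u, Z u⟫ = ‖Z u‖ ^ 2 := real_inner_self_eq_norm_sq (Z u)
      have hexp : 0 < Real.exp (-2 * Θ u) := Real.exp_pos _
      have hZu : Z u = X u - Y u := rfl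
      rw [hcomm, hZn]
      have hineq' : ⟪Z u, v u (X u) - v u (Y u)⟫ ≤ θ u * ‖Z u‖ ^ 2 := by
        rw [hZu]; exact hineq
      nlinarith [hexp, hineq']
  -- Step 4 : conclude
  have hmemS : s ∈ Icc s t := left_mem_Icc.mpr hst
  have hmemT : t ∈ Icc s t := right_mem_Icc.mpr hst
  have hfts : f t ≤ f s := hanti hmemS hmemT hst
  have hΘs : Θ s = 0 := intervalIntegral.integral_same
  have hfs : f s = ‖Z s‖ ^ 2 := by
    show Real.exp (-2 * Θ s) * ⟪Z s, Z s⟫ = _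
    rw [hΘs, real_inner_self_eq_norm_sq]
    norm_num
  have hft : f t = Real.exp (-2 * Θ t) * ‖Z t‖ ^ 2 := by
    show Real.exp (-2 * Θ t) * ⟪Z t, Z t⟫ = _
    rw [real_inner_self_eq_norm_sq]
  rw [hft, hfs] at hfts
  have hkey : ‖Z t‖ ^ 2 ≤ (Real.exp (Θ t) * ‖Z s‖) ^ 2 := by
    have hmul : Real.exp (-2 * Θ t) * Real.exp (Θ t) ^ 2 = 1 := by
      rw [← Real.exp_nat_mul, ← Real.exp_add]
      norm_num
    have hexp : 0 < Real.exp (-2 * Θ t) := Real.exp_pos _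
    have hexp2 : 0 < Real.exp (Θ t) ^ 2 := by positivity
    nlinarith [hfts, hexp, hexp2, hmul]
  have := (pow_le_pow_iff_left₀ (norm_nonneg (Z t)) (by positivity) two_ne_zero).mp hkey
  simpa [hZdef, hΘdef] using this
end
end

section
/- (Stability in the velocity field, one-sided Lipschitz case) Let v : [0,1] × ℝ^d → ℝ^d be continuous and continuously differentiable in x, and let θ : [0,1] → ℝ be continuous with ⟨w, ∇_x v(t,x) w⟩ ≤ θ_t ‖w‖² for all (t,x) and all w ∈ ℝ^d. Let ṽ : [0,1] × ℝ^d → ℝ^d be continuous. Suppose X, Y : [0,1] → ℝ^d are differentiable with X'(t) = v(t, X(t)), Y'(t) = ṽ(t, Y(t)), and X(0) = Y(0). Then ‖X(1) − Y(1)‖² ≤ ( ∫_0^1 exp( 2 ∫_s^1 θ_u du ) ds ) · ∫_0^1 ‖v(s, Y(s)) − ṽ(s, Y(s))‖² ds. -/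
open MeasureTheory Real Set
open scoped RealInnerProductSpace

noncomputable section

private lemma one_sided_aux {E : Type*} [NormedAddCommGroup E] [InnerProductSpace ℝ E]
    {f : E → E} (hf : ContDiff ℝ 1 f) {c : ℝ}
    (h : ∀ x w : E, ⟪w, fderiv ℝ f x w⟫ ≤ c * ‖w‖ ^ 2) (x y : E) :
    ⟪x - y, f x - f y⟫ ≤ c * ‖x - y‖ ^ 2 := by
  set w := x - y with hw
  have hcurve : ∀ s : ℝ, HasDerivAt (fun s : ℝ => y + s • w) w s := by
    intro s
    simpa using ((hasDerivAt_id s).smul_const w).const_add y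
  have hg : ∀ s : ℝ, HasDerivAt (fun s : ℝ => ⟪w, f (y + s • w)⟫)
      (⟪w, fderiv ℝ f (y + s • w) w⟫) s := by
    intro s
    have hfd : HasFDerivAt f (fderiv ℝ f (y + s • w)) (y + s • w) :=
      (hf.differentiable one_ne_zero).differentiableAt.hasFDerivAt
    have := HasDerivAt.inner ℝ (hasDerivAt_const s w) (hfd.comp_hasDerivAt s (hcurve s))
    simpa using this
  have hmono : Monotone (fun s : ℝ => c * ‖w‖ ^ 2 * s - ⟪w, f (y + s • w)⟫) := by
    apply monotone_of_hasDerivAt_nonneg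
      (f' := fun s => c * ‖w‖ ^ 2 - ⟪w, fderiv ℝ f (y + s • w) w⟫)
    · intro s
      have h := ((hasDerivAt_id' s).const_mul (c * ‖w‖ ^ 2)).sub (hg s)
      rw [mul_one] at h
      exact h
    · intro s
      simp only [Pi.zero_apply, sub_nonneg]
      exact h _ _
  have h01 := hmono (show (0:ℝ) ≤ 1 by norm_num)
  simp only [zero_smul, add_zero, one_smul, mul_zero, mul_one, zero_sub] at h01
  have hx : y + w = x := by rw [hw]; abel
  rw [hx] at h01
  rw [inner_sub_right]
  linarith [h01]

private lemma interval_cauchy_schwarz (f g : ℝ → ℝ) (hf : Continuous f) (hg : Continuous g) :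
    (∫ s in (0:ℝ)..1, f s * g s) ^ 2
      ≤ (∫ s in (0:ℝ)..1, f s ^ 2) * ∫ s in (0:ℝ)..1, g s ^ 2 := by
  set F := ∫ s in (0:ℝ)..1, f s ^ 2 with hF
  set S := ∫ s in (0:ℝ)..1, f s * g s with hS
  set G := ∫ s in (0:ℝ)..1, g s ^ 2 with hG
  have key : ∀ c : ℝ, 0 ≤ F * (c * c) + (-(2 * S)) * c + G := by
    intro c
    have h1 : (∫ s in (0:ℝ)..1, (c * f s - g s) ^ 2)
        = F * (c * c) + (-(2 * S)) * c + G := by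
      have e1 : ∀ s : ℝ, (c * f s - g s) ^ 2
          = (c * c) * f s ^ 2 - (2 * c) * (f s * g s) + g s ^ 2 := by intro s; ring
      rw [intervalIntegral.integral_congr (g := fun s =>
        (c * c) * f s ^ 2 - (2 * c) * (f s * g s) + g s ^ 2) (fun s _ => e1 s)]
      rw [intervalIntegral.integral_add, intervalIntegral.integral_sub,
        intervalIntegral.integral_const_mul, intervalIntegral.integral_const_mul]
      · ring
      · exact (continuous_const.mul (hf.pow 2)).intervalIntegrable 0 1
      · exact (continuous_const.mul (hf.mul hg)).intervalIntegrable 0 1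
      · exact ((continuous_const.mul (hf.pow 2)).sub
          (continuous_const.mul (hf.mul hg))).intervalIntegrable 0 1
      · exact (hg.pow 2).intervalIntegrable 0 1
    rw [← h1]
    apply intervalIntegral.integral_nonneg (by norm_num)
    intro s _
    positivity
  have hd := discrim_le_zero (a := F) (b := -(2 * S)) (c := G) (by
    intro x; simpa [mul_comm] using key x)
  rw [discrim] at hd
  nlinarith [hd]

private lemma ftc_cont {f : ℝ → ℝ} (hf : Continuous f) (t : ℝ) :
    HasDerivAt (fun u => ∫ x in (0:ℝ)..u, f x) (f t) t :=
  intervalIntegral.integral_hasDerivAt_right (hf.intervalIntegrable 0 t)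
    (hf.stronglyMeasurable.stronglyMeasurableAtFilter) hf.continuousAt


/-- **Stability in the velocity field (one-sided Lipschitz case).** If `v` is continuous,
`C¹` in the space variable with `⟨w, ∇_x v(t,x) w⟩ ≤ θ_t ‖w‖²`, and `X, Y` solve
`X' = v(t,X)` and `Y' = ṽ(t,Y)` with `X(0) = Y(0)`, then
`‖X(1) − Y(1)‖² ≤ (∫_0^1 exp(2∫_s^1 θ) ds) ∫_0^1 ‖v(s,Y(s)) − ṽ(s,Y(s))‖² ds`. -/
theorem stability_velocity_field_one_sided_lipschitz
    (d : ℕ)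
    (v : ℝ → EuclideanSpace ℝ (Fin d) → EuclideanSpace ℝ (Fin d))
    (hv_cont : Continuous fun q : ℝ × EuclideanSpace ℝ (Fin d) => v q.1 q.2)
    (hv_C1 : ∀ t ∈ Icc (0:ℝ) 1, ContDiff ℝ 1 (v t))
    (θ : ℝ → ℝ) (hθ_cont : Continuous θ)
    (hbound : ∀ t ∈ Icc (0:ℝ) 1, ∀ x w : EuclideanSpace ℝ (Fin d),
      ⟪w, fderiv ℝ (v t) x w⟫ ≤ θ t * ‖w‖ ^ 2)
    (vtil : ℝ → EuclideanSpace ℝ (Fin d) → EuclideanSpace ℝ (Fin d))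
    (hvtil_cont : Continuous fun q : ℝ × EuclideanSpace ℝ (Fin d) => vtil q.1 q.2)
    (X Y : ℝ → EuclideanSpace ℝ (Fin d))
    (hX : ∀ t ∈ Icc (0:ℝ) 1, HasDerivAt X (v t (X t)) t)
    (hY : ∀ t ∈ Icc (0:ℝ) 1, HasDerivAt Y (vtil t (Y t)) t)
    (hXY0 : X 0 = Y 0) :
    ‖X 1 - Y 1‖ ^ 2
      ≤ (∫ s in (0:ℝ)..1, Real.exp (2 * ∫ u in s..1, θ u))
        * ∫ s in (0:ℝ)..1, ‖v s (Y s) - vtil s (Y s)‖ ^ 2 := by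
  -- clamping map
  set σ : ℝ → ℝ := fun t => max 0 (min 1 t) with hσdef
  have hσ_cont : Continuous σ := continuous_const.max (continuous_const.min continuous_id)
  have hσ_mem : ∀ t, σ t ∈ Icc (0:ℝ) 1 := by
    intro t
    refine ⟨le_max_left _ _, ?_⟩
    simp only [hσdef, max_le_iff]
    exact ⟨zero_le_one, min_le_left _ _⟩
  have hσ_id : ∀ t ∈ Icc (0:ℝ) 1, σ t = t := by
    intro t ht
    simp only [hσdef]
    rw [min_eq_right ht.2, max_eq_right ht.1]
  -- continuity of trajectories
  have hXcont : ContinuousOn X (Icc 0 1) :=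
    fun t ht => (hX t ht).continuousAt.continuousWithinAt
  have hYcont : ContinuousOn Y (Icc 0 1) :=
    fun t ht => (hY t ht).continuousAt.continuousWithinAt
  have hYc : Continuous (fun t => Y (σ t)) := hYcont.comp_continuous hσ_cont hσ_mem
  -- the error term (clamped, globally continuous)
  set δ : ℝ → ℝ := fun t => ‖v (σ t) (Y (σ t)) - vtil (σ t) (Y (σ t))‖ with hδdef
  have hδ_cont : Continuous δ := by
    apply Continuous.norm
    exact (hv_cont.comp (hσ_cont.prodMk hYc)).sub (hvtil_cont.comp (hσ_cont.prodMk hYc))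
  have hδ_nonneg : ∀ t, 0 ≤ δ t := fun t => norm_nonneg _
  -- the antiderivative of θ
  set A : ℝ → ℝ := fun t => ∫ u in (0:ℝ)..t, θ u with hAdef
  have hA : ∀ t, HasDerivAt A (θ t) t := fun t => ftc_cont hθ_cont t
  have hA_cont : Continuous A :=
    continuous_iff_continuousAt.mpr fun t => (hA t).continuousAt
  -- difference of trajectories
  set Z : ℝ → EuclideanSpace ℝ (Fin d) := fun t => X t - Y t with hZdef
  have hZ : ∀ t ∈ Icc (0:ℝ) 1, HasDerivAt Z (v t (X t) - vtil t (Y t)) t :=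
    fun t ht => (hX t ht).sub (hY t ht)
  set φ : ℝ → ℝ := fun t => ⟪Z t, Z t⟫ with hφdef
  have hφval : ∀ t, φ t = ‖Z t‖ ^ 2 := fun t => real_inner_self_eq_norm_sq _
  have hφ : ∀ t ∈ Icc (0:ℝ) 1,
      HasDerivAt φ (2 * ⟪Z t, v t (X t) - vtil t (Y t)⟫) t := by
    intro t ht
    have h1 := HasDerivAt.inner ℝ (hZ t ht) (hZ t ht)
    refine h1.congr_deriv ?_
    rw [real_inner_comm (Z t) (v t (X t) - vtil t (Y t))]
    ring
  have hφ_cont : ContinuousOn φ (Icc 0 1) :=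
    (hXcont.sub hYcont).inner (hXcont.sub hYcont)
  set ψ : ℝ → ℝ := fun t => Real.exp (-(2 * A t)) * φ t with hψdef
  have hψ_nonneg : ∀ t, 0 ≤ ψ t := by
    intro t
    apply mul_nonneg (Real.exp_nonneg _)
    rw [hφval]; positivity
  set ψ' : ℝ → ℝ := fun t => Real.exp (-(2 * A t)) *
    (2 * ⟪Z t, v t (X t) - vtil t (Y t)⟫ - 2 * θ t * φ t) with hψ'def
  have hψd : ∀ t ∈ Icc (0:ℝ) 1, HasDerivAt ψ (ψ' t) t := by
    intro t ht
    have hexp : HasDerivAt (fun t => Real.exp (-(2 * A t)))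
        (Real.exp (-(2 * A t)) * (-(2 * θ t))) t :=
      (((hA t).const_mul 2).neg).exp
    have := hexp.mul (hφ t ht)
    refine this.congr_deriv ?_
    simp only [hψ'def]
    ring
  have hψ_cont : ContinuousOn ψ (Icc 0 1) :=
    ((continuous_const.mul hA_cont).neg.rexp.continuousOn).mul hφ_cont
  -- the driving term
  set m : ℝ → ℝ := fun t => Real.exp (-A t) * δ t with hmdef
  have hm_cont : Continuous m := (hA_cont.neg.rexp).mul hδ_cont
  have hm_nonneg : ∀ t, 0 ≤ m t := fun t => mul_nonneg (Real.exp_nonneg _) (hδ_nonneg t)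
  have hexp2 : ∀ t : ℝ, Real.exp (-A t) * Real.exp (-A t) = Real.exp (-(2 * A t)) := by
    intro t
    rw [← Real.exp_add]
    ring_nf
  have hsqrtψ : ∀ t, Real.sqrt (ψ t) = Real.exp (-A t) * ‖Z t‖ := by
    intro t
    have h1 : ψ t = (Real.exp (-A t) * ‖Z t‖) ^ 2 := by
      rw [hψdef]
      simp only
      rw [hφval, mul_pow, sq (Real.exp (-A t)), hexp2 t]
    rw [h1, Real.sqrt_sq (by positivity)]
  -- pointwise differential inequality
  have hψ'_le : ∀ t ∈ Icc (0:ℝ) 1, ψ' t ≤ 2 * Real.sqrt (ψ t) * m t := by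
    intro t ht
    have hsplit : ⟪Z t, v t (X t) - vtil t (Y t)⟫
        = ⟪Z t, v t (X t) - v t (Y t)⟫ + ⟪Z t, v t (Y t) - vtil t (Y t)⟫ := by
      rw [← inner_add_right]
      congr 1
      abel
    have h1 : ⟪Z t, v t (X t) - v t (Y t)⟫ ≤ θ t * ‖Z t‖ ^ 2 :=
      one_sided_aux (hv_C1 t ht) (hbound t ht) (X t) (Y t)
    have h2 : ⟪Z t, v t (Y t) - vtil t (Y t)⟫ ≤ ‖Z t‖ * δ t := by
      have hδt : δ t = ‖v t (Y t) - vtil t (Y t)‖ := by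
        simp only [hδdef]
        rw [hσ_id t ht]
      rw [hδt]
      exact real_inner_le_norm _ _
    have hkey : 2 * ⟪Z t, v t (X t) - vtil t (Y t)⟫ - 2 * θ t * φ t
        ≤ 2 * (‖Z t‖ * δ t) := by
      rw [hsplit, hφval]
      linarith
    calc ψ' t ≤ Real.exp (-(2 * A t)) * (2 * (‖Z t‖ * δ t)) := by
          exact mul_le_mul_of_nonneg_left hkey (Real.exp_nonneg _)
      _ = 2 * Real.sqrt (ψ t) * m t := by
          rw [hsqrtψ t]
          simp only [hmdef]
          rw [← hexp2 t]
          ring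
  -- Gronwall-type estimate with regularization
  have hmain : ∀ ε : ℝ, 0 < ε → Real.sqrt (ψ 1) ≤ (∫ s in (0:ℝ)..1, m s) + ε := by
    intro ε hε
    set r : ℝ → ℝ := fun t => Real.sqrt (ψ t + ε ^ 2) with hrdef
    have hne : ∀ t, ψ t + ε ^ 2 ≠ 0 := by
      intro t
      have := hψ_nonneg t
      positivity
    have hrd : ∀ t ∈ Icc (0:ℝ) 1,
        HasDerivAt r (ψ' t / (2 * Real.sqrt (ψ t + ε ^ 2))) t := by
      intro t ht
      have := ((hψd t ht).add_const (ε ^ 2)).sqrt (hne t)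
      simpa [hrdef] using this
    set F : ℝ → ℝ := fun t => (∫ u in (0:ℝ)..t, m u) - r t with hFdef
    have hFd : ∀ t ∈ Icc (0:ℝ) 1,
        HasDerivAt F (m t - ψ' t / (2 * Real.sqrt (ψ t + ε ^ 2))) t :=
      fun t ht => (ftc_cont hm_cont t).sub (hrd t ht)
    have hF'_nonneg : ∀ t ∈ Icc (0:ℝ) 1,
        0 ≤ m t - ψ' t / (2 * Real.sqrt (ψ t + ε ^ 2)) := by
      intro t ht
      have hspos : 0 < Real.sqrt (ψ t + ε ^ 2) := Real.sqrt_pos.mpr (by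
        have := hψ_nonneg t
        positivity)
      rw [sub_nonneg, div_le_iff₀ (by positivity)]
      calc ψ' t ≤ 2 * Real.sqrt (ψ t) * m t := hψ'_le t ht
        _ ≤ 2 * Real.sqrt (ψ t + ε ^ 2) * m t := by
            apply mul_le_mul_of_nonneg_right _ (hm_nonneg t)
            have : Real.sqrt (ψ t) ≤ Real.sqrt (ψ t + ε ^ 2) :=
              Real.sqrt_le_sqrt (by nlinarith [sq_nonneg ε])
            linarith
        _ = m t * (2 * Real.sqrt (ψ t + ε ^ 2)) := by ring
    have hr_cont : ContinuousOn r (Icc 0 1) := by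
      apply Real.continuous_sqrt.comp_continuousOn
      exact hψ_cont.add continuousOn_const
    have hF_cont : ContinuousOn F (Icc 0 1) := by
      apply ContinuousOn.sub _ hr_cont
      have : Continuous (fun t => ∫ u in (0:ℝ)..t, m u) :=
        continuous_iff_continuousAt.mpr fun t => (ftc_cont hm_cont t).continuousAt
      exact this.continuousOn
    have hmono : MonotoneOn F (Icc 0 1) := by
      apply monotoneOn_of_hasDerivWithinAt_nonneg (convex_Icc 0 1) hF_cont
        (f' := fun t => m t - ψ' t / (2 * Real.sqrt (ψ t + ε ^ 2)))
      · intro t ht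
        rw [interior_Icc] at ht
        exact (hFd t (Ioo_subset_Icc_self ht)).hasDerivWithinAt
      · intro t ht
        rw [interior_Icc] at ht
        exact hF'_nonneg t (Ioo_subset_Icc_self ht)
    have h01 := hmono (left_mem_Icc.mpr zero_le_one) (right_mem_Icc.mpr zero_le_one)
      zero_le_one
    have hψ0 : ψ 0 = 0 := by
      simp only [hψdef, hφdef, hZdef]
      rw [hXY0]
      simp
    have hr0 : r 0 = ε := by
      simp only [hrdef]
      rw [hψ0, zero_add, Real.sqrt_sq hε.le]
    simp only [hFdef, intervalIntegral.integral_same, hr0, zero_sub] at h01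
    have hr1 : Real.sqrt (ψ 1) ≤ r 1 := by
      apply Real.sqrt_le_sqrt
      nlinarith [sq_nonneg ε]
    linarith
  have hInt_m : Real.sqrt (ψ 1) ≤ ∫ s in (0:ℝ)..1, m s :=
    _root_.le_of_forall_pos_le_add hmain
  -- unfold to the Duhamel estimate
  set f : ℝ → ℝ := fun s => Real.exp (A 1 - A s) with hfdef
  have hf_cont : Continuous f := (continuous_const.sub hA_cont).rexp
  have hZ1 : ‖Z 1‖ ≤ ∫ s in (0:ℝ)..1, f s * δ s := by
    have h2 : ‖Z 1‖ = Real.exp (A 1) * Real.sqrt (ψ 1) := by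
      rw [hsqrtψ 1, ← mul_assoc, ← Real.exp_add]
      simp
    rw [h2]
    calc Real.exp (A 1) * Real.sqrt (ψ 1)
        ≤ Real.exp (A 1) * ∫ s in (0:ℝ)..1, m s :=
          mul_le_mul_of_nonneg_left hInt_m (Real.exp_nonneg _)
      _ = ∫ s in (0:ℝ)..1, Real.exp (A 1) * m s :=
          (intervalIntegral.integral_const_mul _ _).symm
      _ = ∫ s in (0:ℝ)..1, f s * δ s := by
          apply intervalIntegral.integral_congr
          intro s _
          simp only [hmdef, hfdef]
          rw [← mul_assoc, ← Real.exp_add]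
          ring_nf
  have hAs : ∀ s : ℝ, A 1 - A s = ∫ u in s..1, θ u := by
    intro s
    simp only [hAdef]
    exact intervalIntegral.integral_interval_sub_left
      (hθ_cont.intervalIntegrable 0 1) (hθ_cont.intervalIntegrable 0 s)
  have hcs := interval_cauchy_schwarz f δ hf_cont hδ_cont
  have hRHS1 : (∫ s in (0:ℝ)..1, f s ^ 2)
      = ∫ s in (0:ℝ)..1, Real.exp (2 * ∫ u in s..1, θ u) := by
    apply intervalIntegral.integral_congr
    intro s _
    simp only [hfdef]
    rw [← hAs s, sq, ← Real.exp_add]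
    ring_nf
  have hRHS2 : (∫ s in (0:ℝ)..1, δ s ^ 2)
      = ∫ s in (0:ℝ)..1, ‖v s (Y s) - vtil s (Y s)‖ ^ 2 := by
    apply intervalIntegral.integral_congr
    intro s hs
    rw [uIcc_of_le zero_le_one] at hs
    simp only [hδdef]
    rw [hσ_id s hs]
  have hI_nonneg : 0 ≤ ∫ s in (0:ℝ)..1, f s * δ s :=
    intervalIntegral.integral_nonneg zero_le_one
      (fun s _ => mul_nonneg (Real.exp_nonneg _) (hδ_nonneg s))
  have hgoal : ‖Z 1‖ ^ 2 ≤ (∫ s in (0:ℝ)..1, f s * δ s) ^ 2 :=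
    pow_le_pow_left₀ (norm_nonneg _) hZ1 2
  have : ‖X 1 - Y 1‖ = ‖Z 1‖ := rfl
  rw [this]
  calc ‖Z 1‖ ^ 2 ≤ (∫ s in (0:ℝ)..1, f s * δ s) ^ 2 := hgoal
    _ ≤ (∫ s in (0:ℝ)..1, f s ^ 2) * ∫ s in (0:ℝ)..1, δ s ^ 2 := hcs
    _ = _ := by rw [hRHS1, hRHS2]
end
end

section
/- (Stability in the velocity field, uniformly Lipschitz approximation) Let v, ṽ : [0,1] × ℝ^d → ℝ^d be continuous, and suppose ṽ(t,·) is C₃-Lipschitz in the space variable uniformly in t ∈ [0,1], for some constant C₃ > 0. Suppose X, Y : [0,1] → ℝ^d are differentiable with X'(t) = v(t, X(t)), Y'(t) = ṽ(t, Y(t)), and X(0) = Y(0). Then ‖Y(1) − X(1)‖² ≤ ((exp(2 C₃) − 1)/(2 C₃)) · ∫_0^1 ‖v(s, X(s)) − ṽ(s, X(s))‖² ds. -/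
open MeasureTheory Real Set

noncomputable section

/-- **Stability in the velocity field (uniformly Lipschitz approximation).** If `ṽ(t,·)`
is `C₃`-Lipschitz uniformly in `t`, and `X, Y` solve `X' = v(t,X)` and `Y' = ṽ(t,Y)` with
`X(0) = Y(0)`, then
`‖Y(1) − X(1)‖² ≤ ((exp(2C₃) − 1)/(2C₃)) ∫_0^1 ‖v(s,X(s)) − ṽ(s,X(s))‖² ds`. -/
theorem stability_velocity_field_uniform_lipschitz
    (d : ℕ)
    (v vtil : ℝ → EuclideanSpace ℝ (Fin d) → EuclideanSpace ℝ (Fin d))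
    (hv_cont : Continuous fun q : ℝ × EuclideanSpace ℝ (Fin d) => v q.1 q.2)
    (hvtil_cont : Continuous fun q : ℝ × EuclideanSpace ℝ (Fin d) => vtil q.1 q.2)
    (C₃ : ℝ) (hC₃ : 0 < C₃)
    (hvtil_lip : ∀ t ∈ Icc (0:ℝ) 1, ∀ x y : EuclideanSpace ℝ (Fin d),
      ‖vtil t x - vtil t y‖ ≤ C₃ * ‖x - y‖)
    (X Y : ℝ → EuclideanSpace ℝ (Fin d))
    (hX : ∀ t ∈ Icc (0:ℝ) 1, HasDerivAt X (v t (X t)) t)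
    (hY : ∀ t ∈ Icc (0:ℝ) 1, HasDerivAt Y (vtil t (Y t)) t)
    (hXY0 : X 0 = Y 0) :
    ‖Y 1 - X 1‖ ^ 2
      ≤ ((Real.exp (2 * C₃) - 1) / (2 * C₃))
        * ∫ s in (0:ℝ)..1, ‖v s (X s) - vtil s (X s)‖ ^ 2 := by
  -- clamp to [0,1]
  set ρ : ℝ → ℝ := fun t => max 0 (min t 1) with hρdef
  have hρcont : Continuous ρ := continuous_const.max (continuous_id.min continuous_const)
  have hρmem : ∀ t, ρ t ∈ Icc (0:ℝ) 1 := fun t =>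
    ⟨le_max_left _ _, max_le (by norm_num) (min_le_right _ _)⟩
  have hρeq : ∀ t ∈ Icc (0:ℝ) 1, ρ t = t := by
    intro t ht
    simp only [hρdef]
    rw [min_eq_left ht.2, max_eq_right ht.1]
  have hXc : ContinuousOn X (Icc 0 1) := fun t ht =>
    ((hX t ht).continuousAt).continuousWithinAt
  have hXρ : Continuous fun t => X (ρ t) := hXc.comp_continuous hρcont hρmem
  set ε : ℝ → ℝ := fun s => ‖v (ρ s) (X (ρ s)) - vtil (ρ s) (X (ρ s))‖ with hεdef
  have hεcont : Continuous ε := by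
    apply Continuous.norm
    exact (hv_cont.comp (hρcont.prodMk hXρ)).sub (hvtil_cont.comp (hρcont.prodMk hXρ))
  set w : ℝ → ℝ := fun s => Real.exp (-(C₃ * s)) with hwdef
  have hwcont : Continuous w := (continuous_const.mul continuous_id).neg.rexp
  set g : ℝ → ℝ := fun s => w s * ε s with hgdef
  have hgcont : Continuous g := hwcont.mul hεcont
  set A : ℝ → ℝ := fun t => ∫ s in (0:ℝ)..t, g s with hAdef
  have hA : ∀ t, HasDerivAt A (g t) t := fun t =>
    (hgcont.integral_hasStrictDerivAt 0 t).hasDerivAt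
  set K := C₃ + 1 with hKdef
  -- Gronwall step
  have key : ∀ δ : ℝ, 0 < δ → ‖Y 1 - X 1‖ ≤ Real.exp (C₃ * 1) * A 1 + δ * Real.exp (K * 1) := by
    intro δ hδ
    set B : ℝ → ℝ := fun t => Real.exp (C₃ * t) * A t + δ * Real.exp (K * t) with hBdef
    set B' : ℝ → ℝ := fun t =>
      (Real.exp (C₃ * t) * C₃ * A t + ε t) + δ * (Real.exp (K * t) * K) with hB'def
    have hB : ∀ t, HasDerivAt B (B' t) t := by
      intro t
      have h1 : HasDerivAt (fun t => Real.exp (C₃ * t)) (Real.exp (C₃ * t) * C₃) t := by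
        simpa using ((hasDerivAt_id t).const_mul C₃).exp
      have h2 : HasDerivAt (fun t => Real.exp (C₃ * t) * A t)
          (Real.exp (C₃ * t) * C₃ * A t + Real.exp (C₃ * t) * g t) t := h1.mul (hA t)
      have h3 : HasDerivAt (fun t => δ * Real.exp (K * t)) (δ * (Real.exp (K * t) * K)) t := by
        simpa using (((hasDerivAt_id t).const_mul K).exp).const_mul δ
      have h4 := h2.add h3
      have hgt : Real.exp (C₃ * t) * g t = ε t := by
        simp only [hgdef, hwdef]
        rw [Real.exp_neg]
        field_simp
      rw [hB'def]
      simp only [← hgt]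
      exact h4
    have main := image_norm_le_of_norm_deriv_right_lt_deriv_boundary
      (f := fun t => Y t - X t) (f' := fun t => vtil t (Y t) - v t (X t))
      (a := 0) (b := 1) (B := B) (B' := B')
      (fun t ht => (((hY t ht).sub (hX t ht)).continuousAt).continuousWithinAt)
      (fun x hx => (((hY x (Ico_subset_Icc_self hx)).sub
        (hX x (Ico_subset_Icc_self hx)))).hasDerivWithinAt)
      (by
        show ‖Y 0 - X 0‖ ≤ B 0
        rw [← hXY0, sub_self, norm_zero, hBdef]
        simp only [mul_zero, Real.exp_zero, one_mul, mul_one]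
        rw [hAdef]
        simp only [intervalIntegral.integral_same, mul_zero, zero_add]
        positivity)
      hB
      (by
        intro x hx heq
        have hx' : x ∈ Icc (0:ℝ) 1 := Ico_subset_Icc_self hx
        have hεx : ε x = ‖vtil x (X x) - v x (X x)‖ := by
          simp only [hεdef, hρeq x hx', norm_sub_rev]
        have h1 : ‖vtil x (Y x) - v x (X x)‖
            ≤ ‖vtil x (Y x) - vtil x (X x)‖ + ‖vtil x (X x) - v x (X x)‖ := by
          calc ‖vtil x (Y x) - v x (X x)‖
              = ‖(vtil x (Y x) - vtil x (X x)) + (vtil x (X x) - v x (X x))‖ := by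
                rw [sub_add_sub_cancel]
            _ ≤ _ := norm_add_le _ _
        have h2 : ‖vtil x (Y x) - vtil x (X x)‖ ≤ C₃ * ‖Y x - X x‖ :=
          hvtil_lip x hx' _ _
        have hbound : ‖vtil x (Y x) - v x (X x)‖ ≤ C₃ * B x + ε x := by
          rw [← heq, hεx]; linarith
        have hlt : C₃ * B x + ε x < B' x := by
          simp only [hBdef, hB'def, hKdef]
          have he1 : 0 < Real.exp (C₃ * x) := Real.exp_pos _
          have he2 : 0 < Real.exp ((C₃ + 1) * x) := Real.exp_pos _
          nlinarith
        exact lt_of_le_of_lt hbound hlt)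
    exact main (right_mem_Icc.2 zero_le_one)
  have key2 : ‖Y 1 - X 1‖ ≤ Real.exp C₃ * A 1 := by
    rw [show Real.exp C₃ * A 1 = Real.exp (C₃ * 1) * A 1 by rw [mul_one]]
    refine le_of_forall_pos_le_add ?_
    intro η hη
    have hek : 0 < Real.exp (K * 1) := Real.exp_pos _
    have := key (η / Real.exp (K * 1)) (by positivity)
    rwa [div_mul_cancel₀ _ (ne_of_gt hek)] at this
  -- Cauchy–Schwarz step
  set P := A 1 with hPdef
  set Q := ∫ s in (0:ℝ)..1, (ε s) ^ 2 with hQdef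
  set W := (1 - Real.exp (-(2 * C₃))) / (2 * C₃) with hWdef
  have hWpos : 0 < W := by
    have : Real.exp (-(2 * C₃)) < 1 := Real.exp_lt_one_iff.2 (by linarith)
    rw [hWdef]
    apply div_pos (by linarith) (by linarith)
  have hwsq : ∀ s : ℝ, (w s) ^ 2 = Real.exp (-(2 * C₃) * s) := by
    intro s
    simp only [hwdef, sq, ← Real.exp_add]
    ring_nf
  have hWint : (∫ s in (0:ℝ)..1, (w s) ^ 2) = W := by
    have hne : (-(2 * C₃)) ≠ 0 := by
      have : (0:ℝ) < 2 * C₃ := by linarith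
      exact neg_ne_zero.2 (ne_of_gt this)
    have hderiv : ∀ s ∈ uIcc (0:ℝ) 1,
        HasDerivAt (fun s => Real.exp (-(2 * C₃) * s) / (-(2 * C₃))) ((w s) ^ 2) s := by
      intro s _
      have h1 : HasDerivAt (fun s => Real.exp (-(2 * C₃) * s))
          (Real.exp (-(2 * C₃) * s) * (-(2 * C₃))) s := by
        simpa using ((hasDerivAt_id s).const_mul (-(2 * C₃))).exp
      have h2 := h1.div_const (-(2 * C₃))
      rw [mul_div_cancel_right₀ _ hne] at h2
      rw [hwsq s]
      exact h2
    have hint : IntervalIntegrable (fun s => (w s) ^ 2) volume 0 1 :=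
      (hwcont.pow 2).intervalIntegrable _ _
    rw [intervalIntegral.integral_eq_sub_of_hasDerivAt hderiv hint]
    simp only [mul_one, mul_zero, Real.exp_zero]
    rw [hWdef]
    field_simp
    ring
  have hPg : P = ∫ s in (0:ℝ)..1, g s := rfl
  set c := P / W with hcdef
  have h0 : (0:ℝ) ≤ ∫ s in (0:ℝ)..1, (c * w s - ε s) ^ 2 :=
    intervalIntegral.integral_nonneg zero_le_one fun s _ => sq_nonneg _
  have hexp : (∫ s in (0:ℝ)..1, (c * w s - ε s) ^ 2) = c ^ 2 * W - 2 * c * P + Q := by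
    have hfun : (fun s => (c * w s - ε s) ^ 2)
        = fun s => (c ^ 2 * (w s) ^ 2 - (2 * c) * g s) + (ε s) ^ 2 := by
      funext s
      simp only [hgdef]
      ring
    rw [hfun]
    have i1 : IntervalIntegrable (fun s => c ^ 2 * (w s) ^ 2) volume 0 1 :=
      (continuous_const.mul (hwcont.pow 2)).intervalIntegrable _ _
    have i2 : IntervalIntegrable (fun s => (2 * c) * g s) volume 0 1 :=
      (continuous_const.mul hgcont).intervalIntegrable _ _
    have i3 : IntervalIntegrable (fun s => (ε s) ^ 2) volume 0 1 :=
      (hεcont.pow 2).intervalIntegrable _ _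
    rw [intervalIntegral.integral_add (i1.sub i2) i3,
      intervalIntegral.integral_sub i1 i2,
      intervalIntegral.integral_const_mul, intervalIntegral.integral_const_mul,
      hWint, ← hPg, ← hQdef]
  have hCS : P ^ 2 ≤ W * Q := by
    rw [hexp, hcdef] at h0
    have hWne : W ≠ 0 := ne_of_gt hWpos
    have heq : (P / W) ^ 2 * W - 2 * (P / W) * P + Q = Q - P ^ 2 / W := by
      field_simp
      ring
    rw [heq] at h0
    have h5 : P ^ 2 / W ≤ Q := by linarith
    have := (div_le_iff₀ hWpos).mp h5
    linarith
  have hQeq : (∫ s in (0:ℝ)..1, ‖v s (X s) - vtil s (X s)‖ ^ 2) = Q := by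
    rw [hQdef]
    apply intervalIntegral.integral_congr
    intro s hs
    rw [uIcc_of_le zero_le_one] at hs
    simp only [hεdef, hρeq s hs]
  rw [hQeq]
  have h1 : ‖Y 1 - X 1‖ ^ 2 ≤ (Real.exp C₃ * P) ^ 2 :=
    pow_le_pow_left₀ (norm_nonneg _) key2 2
  have hee : Real.exp (2 * C₃) * Real.exp (-(2 * C₃)) = 1 := by
    rw [← Real.exp_add]
    norm_num
  have h2 : (Real.exp C₃ * P) ^ 2 = Real.exp (2 * C₃) * P ^ 2 := by
    rw [show (2:ℝ) * C₃ = C₃ + C₃ by ring, Real.exp_add]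
    ring
  calc ‖Y 1 - X 1‖ ^ 2 ≤ Real.exp (2 * C₃) * P ^ 2 := h1.trans_eq h2
    _ ≤ Real.exp (2 * C₃) * (W * Q) :=
        mul_le_mul_of_nonneg_left hCS (Real.exp_pos _).le
    _ = ((Real.exp (2 * C₃) * (1 - Real.exp (-(2 * C₃)))) / (2 * C₃)) * Q := by
        rw [hWdef]; ring
    _ = ((Real.exp (2 * C₃) - 1) / (2 * C₃)) * Q := by
        rw [mul_sub, mul_one, hee]
end
end
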